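/- arXiv:1902.09309 — 10 statements merged into one kernel-verified Lean document; each statement's English description precedes it below -/
import Mathlib

section
/- For all nonnegative integers n and m with m ≤ n, the cycle Stirling numbers satisfy [n+1, m+1] = (-1)^(n-m) · Σ_{h=0}^{n-m} C(h+m, m) · [n, h+m] · (-n)^h, where the equality holds in the integers. -/
open Polynomial Finset


/-- Unsigned Stirling numbers of the first kind (cycle Stirling numbers). -/
def stirling1 : ℕ → ℕ → ℕ
  | 0, 0 => 1
  | 0, _ + 1 => 0
  | _ + 1, 0 => 0
  | n + 1, k + 1 => n * stirling1 n (k + 1) + stirling1 n k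

lemma stirling1_zero {n k : ℕ} (h : n < k) : stirling1 n k = 0 := by
  induction n generalizing k with
  | zero => cases k with | zero => omega | succ k => rfl
  | succ n ih =>
    cases k with
    | zero => omega
    | succ k => simp [stirling1, ih (show n < k + 1 by omega), ih (show n < k by omega)]

lemma coeff_mul_X_add_C (p : ℤ[X]) (a : ℤ) (k : ℕ) :
    (p * (X + C a)).coeff k = (if k = 0 then 0 else p.coeff (k - 1)) + a * p.coeff k := by
  cases k with
  | zero => simp [mul_add, coeff_mul_X_zero, coeff_mul_C, mul_comm]
  | succ k => simp [mul_add, coeff_mul_X, coeff_mul_C, mul_comm]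

lemma asc_coeff : ∀ n k : ℕ, (ascPochhammer ℤ n).coeff k = stirling1 n k := by
  intro n
  induction n with
  | zero => intro k; cases k <;> simp [stirling1, coeff_one]
  | succ n ih =>
    intro k
    rw [ascPochhammer_succ_right, ← C_eq_natCast, coeff_mul_X_add_C]
    cases k with
    | zero =>
      simp only [if_pos rfl, zero_add, ih]
      cases n with
      | zero => simp [stirling1]
      | succ n => simp [stirling1, stirling1_zero (Nat.succ_pos n)]
    | succ k =>
      simp only [Nat.succ_ne_zero, if_false, Nat.add_sub_cancel, ih]
      show (stirling1 n k : ℤ) + n * stirling1 n (k+1) = (stirling1 (n+1) (k+1) : ℤ)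
      simp [stirling1]; ring

lemma desc_coeff : ∀ n k : ℕ, (descPochhammer ℤ n).coeff k
    = (-1) ^ (n - k) * stirling1 n k := by
  intro n
  induction n with
  | zero => intro k; cases k <;> simp [stirling1, coeff_one]
  | succ n ih =>
    intro k
    have hxc : (X - (n : ℤ[X])) = X + C (-(n:ℤ)) := by
      rw [map_neg, C_eq_natCast]; ring
    rw [descPochhammer_succ_right, hxc, coeff_mul_X_add_C]
    cases k with
    | zero =>
      simp only [if_pos rfl, zero_add, ih]
      cases n with
      | zero => simp [stirling1]
      | succ n => simp [stirling1, stirling1_zero (Nat.succ_pos n)]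
    | succ k =>
      simp only [Nat.succ_ne_zero, if_false, Nat.add_sub_cancel, ih]
      rcases le_or_gt (k+1) n with h | h
      · have h1 : n - k = (n - (k+1)) + 1 := by omega
        have h2 : n + 1 - (k + 1) = n - k := by omega
        rw [h1, h2, h1]
        show ((-1:ℤ))^(n-(k+1)+1) * stirling1 n k + -(n:ℤ) * ((-1)^(n-(k+1)) * stirling1 n (k+1))
          = (-1)^(n-(k+1)+1) * stirling1 (n+1) (k+1)
        simp [stirling1, pow_succ]; ring
      · rcases Nat.lt_or_ge k n with h' | h'
        ·
          omega
        · -- n ≤ k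
          have e1 : stirling1 n (k+1) = 0 := stirling1_zero (by omega)
          have e3 : stirling1 (n+1) (k+1) = stirling1 n k := by
            simp [stirling1, e1]
          rw [e1, e3]
          rcases Nat.eq_or_lt_of_le h' with rfl | h''
          · simp
          · rw [stirling1_zero h'']
            simp

lemma key (n : ℕ) :
    ascPochhammer ℤ (n+1) = X * (descPochhammer ℤ n).comp (X + C (n:ℤ)) := by
  rw [ascPochhammer_succ_left, descPochhammer_eq_ascPochhammer, comp_assoc]
  congr 1
  congr 1
  simp [sub_comp, add_comp, C_eq_natCast]

theorem stirling1_identity_recst2 (n m : ℕ) (hmn : m ≤ n) :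
    (stirling1 (n + 1) (m + 1) : ℤ) =
      (-1) ^ (n - m) * ∑ h ∈ Finset.range (n - m + 1),
        ((h + m).choose m : ℤ) * stirling1 n (h + m) * (-(n : ℤ)) ^ h := by
  have hdeg : (descPochhammer ℤ n).natDegree < n + 1 := by
    rw [descPochhammer_natDegree]; omega
  have expand : (descPochhammer ℤ n).comp (X + C (n:ℤ))
      = ∑ k ∈ range (n+1), C ((descPochhammer ℤ n).coeff k) * (X + C (n:ℤ)) ^ k := by
    conv_lhs => rw [(descPochhammer ℤ n).as_sum_range' (n+1) hdeg]
    rw [Polynomial.sum_comp]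
    congr 1; funext k
    rw [← C_mul_X_pow_eq_monomial, mul_comp, C_comp, X_pow_comp]
  have lhs_eq : (stirling1 (n + 1) (m + 1) : ℤ)
      = ∑ k ∈ range (n+1), (descPochhammer ℤ n).coeff k * ((n:ℤ) ^ (k - m) * (k.choose m : ℤ)) := by
    rw [← asc_coeff, key, coeff_X_mul, expand, finset_sum_coeff]
    congr 1; funext k
    rw [coeff_C_mul, coeff_X_add_C_pow]
  have h1 : ∑ k ∈ Finset.Ico 0 m,
      (descPochhammer ℤ n).coeff k * ((n:ℤ) ^ (k - m) * (k.choose m : ℤ)) = 0 := by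
    apply Finset.sum_eq_zero
    intro k hk
    simp only [Finset.mem_Ico] at hk
    rw [Nat.choose_eq_zero_of_lt hk.2]
    simp
  have h2 : n + 1 - m = n - m + 1 := by omega
  have split : (∑ k ∈ Finset.range (n+1),
        (descPochhammer ℤ n).coeff k * ((n:ℤ) ^ (k - m) * (k.choose m : ℤ)))
      = ∑ h ∈ Finset.range (n-m+1),
        (descPochhammer ℤ n).coeff (m+h) * ((n:ℤ) ^ (m+h-m) * ((m+h).choose m : ℤ)) := by
    rw [Finset.range_eq_Ico, ← Finset.sum_Ico_consecutive _ (Nat.zero_le m)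
      (by omega : m ≤ n+1), h1, zero_add, Finset.sum_Ico_eq_sum_range, h2,
      Finset.range_eq_Ico]
  rw [lhs_eq, split, Finset.mul_sum]
  apply Finset.sum_congr rfl
  intro h hh
  simp only [Finset.mem_range] at hh
  have hhn : h ≤ n - m := by omega
  rw [desc_coeff]
  have e1 : n - (m + h) = n - m - h := by omega
  have e2 : m + h - m = h := by omega
  have e3 : m + h = h + m := by omega
  rw [e1, e2, e3]
  have esign : ((-1:ℤ)) ^ (n - m - h) = (-1)^(n-m) * (-1)^h := by
    have h4 : n - m = (n - m - h) + h := by omega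
    have h5 : ((-1:ℤ))^h * (-1)^h = 1 := by
      rw [← pow_add]; exact Even.neg_one_pow ⟨h, rfl⟩
    calc ((-1:ℤ)) ^ (n - m - h) = (-1)^(n-m-h) * ((-1)^h * (-1)^h) := by
          rw [h5, mul_one]
      _ = (-1)^(n-m) * (-1)^h := by
          rw [← mul_assoc, ← pow_add, show n-m-h+h = n-m from by omega]
  rw [esign, neg_pow (n:ℤ) h]
  ring
end

section
/- For every nonnegative integer n and every integer k ≥ 1, the generalized harmonic numbers and cycle Stirling numbers satisfy the convolution k · [n+1, k+1] = - Σ_{j=0}^{k-1} (-1)^(k-j) · H_n^(k-j) · [n+1, j+1], where the equality holds in the rational numbers. -/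
open Finset

/-- Generalized harmonic number `H_n^(k) = ∑_{j=1}^n 1/j^k`. -/
def genH (n k : ℕ) : ℚ := ∑ j ∈ Finset.range n, (1 : ℚ) / (j + 1) ^ k

lemma key_s3 : ∀ n k : ℕ, (k : ℚ) * stirling1 (n + 1) (k + 1) =
    -∑ j ∈ Finset.range k, (-1 : ℚ) ^ (k - j) * genH n (k - j) * stirling1 (n + 1) (j + 1) := by
  intro n
  induction n with
  | zero =>
    intro k
    have hH : ∀ m, genH 0 m = 0 := by intro m; simp [genH]
    cases k with
    | zero => simp
    | succ m =>
      have h1 : stirling1 1 (m + 2) = 0 := rfl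
      rw [h1]
      simp [hH]
  | succ n ih =>
    intro k
    cases k with
    | zero => simp
    | succ m =>
      set N : ℚ := (n : ℚ) + 1 with hNdef
      have hN : N ≠ 0 := by positivity
      have hs : ∀ j : ℕ, ((stirling1 (n + 2) (j + 1) : ℚ)) =
          N * stirling1 (n + 1) (j + 1) + stirling1 (n + 1) j := by
        intro j
        have : stirling1 (n + 2) (j + 1) =
            (n + 1) * stirling1 (n + 1) (j + 1) + stirling1 (n + 1) j := rfl
        rw [this]; push_cast; ring
      have hH : ∀ e : ℕ, genH (n + 1) e = genH n e + (1 / N) ^ e := by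
        intro e
        rw [genH, Finset.sum_range_succ, ← genH, div_pow, one_pow]
      have hs0 : (stirling1 (n + 1) 0 : ℚ) = 0 := by
        have : stirling1 (n + 1) 0 = 0 := rfl
        rw [this]; norm_num
      -- expand the sum into four pieces
      have expand :
          ∑ j ∈ Finset.range (m + 1),
              (-1 : ℚ) ^ (m + 1 - j) * genH (n + 1) (m + 1 - j) * stirling1 (n + 2) (j + 1)
          = (N * ∑ j ∈ Finset.range (m + 1),
                (-1 : ℚ) ^ (m + 1 - j) * genH n (m + 1 - j) * stirling1 (n + 1) (j + 1))
            + (∑ j ∈ Finset.range (m + 1),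
                (-1 : ℚ) ^ (m + 1 - j) * genH n (m + 1 - j) * stirling1 (n + 1) j)
            + (N * ∑ j ∈ Finset.range (m + 1),
                (-1 : ℚ) ^ (m + 1 - j) * (1 / N) ^ (m + 1 - j) * stirling1 (n + 1) (j + 1))
            + (∑ j ∈ Finset.range (m + 1),
                (-1 : ℚ) ^ (m + 1 - j) * (1 / N) ^ (m + 1 - j) * stirling1 (n + 1) j) := by
        rw [Finset.mul_sum, Finset.mul_sum, ← Finset.sum_add_distrib, ← Finset.sum_add_distrib,
          ← Finset.sum_add_distrib]
        refine Finset.sum_congr rfl fun j _ => ?_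
        rw [hs j, hH (m + 1 - j)]
        ring
      -- piece 1 via ih (m+1)
      have P1 : ∑ j ∈ Finset.range (m + 1),
            (-1 : ℚ) ^ (m + 1 - j) * genH n (m + 1 - j) * stirling1 (n + 1) (j + 1)
          = -((m : ℚ) + 1) * stirling1 (n + 1) (m + 2) := by
        have h := ih (m + 1)
        push_cast at h
        linarith
      -- piece 2: reindex and apply ih m
      have P2 : ∑ j ∈ Finset.range (m + 1),
            (-1 : ℚ) ^ (m + 1 - j) * genH n (m + 1 - j) * stirling1 (n + 1) j
          = -(m : ℚ) * stirling1 (n + 1) (m + 1) := by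
        rw [Finset.sum_range_succ']
        simp only [Nat.succ_sub_succ, Nat.sub_zero, hs0, mul_zero]
        have h := ih m
        push_cast at h
        linarith
      -- piece 4: reindex
      have P4 : ∑ j ∈ Finset.range (m + 1),
            (-1 : ℚ) ^ (m + 1 - j) * (1 / N) ^ (m + 1 - j) * stirling1 (n + 1) j
          = ∑ i ∈ Finset.range m,
            (-1 : ℚ) ^ (m - i) * (1 / N) ^ (m - i) * stirling1 (n + 1) (i + 1) := by
        rw [Finset.sum_range_succ']
        simp [Nat.succ_sub_succ, hs0]
      -- piece 3: split off top term and telescope against piece 4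
      have P3 : N * ∑ j ∈ Finset.range (m + 1),
            (-1 : ℚ) ^ (m + 1 - j) * (1 / N) ^ (m + 1 - j) * stirling1 (n + 1) (j + 1)
          = -(∑ i ∈ Finset.range m,
                (-1 : ℚ) ^ (m - i) * (1 / N) ^ (m - i) * stirling1 (n + 1) (i + 1))
            - stirling1 (n + 1) (m + 1) := by
        rw [Finset.sum_range_succ, mul_add]
        have htop : N * ((-1 : ℚ) ^ (m + 1 - m) * (1 / N) ^ (m + 1 - m) * stirling1 (n + 1) (m + 1))
            = -(stirling1 (n + 1) (m + 1) : ℚ) := by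
          have : m + 1 - m = 1 := by omega
          rw [this]
          field_simp
        rw [htop, Finset.mul_sum]
        have hmain : ∀ j ∈ Finset.range m,
            N * ((-1 : ℚ) ^ (m + 1 - j) * (1 / N) ^ (m + 1 - j) * stirling1 (n + 1) (j + 1))
            = -((-1 : ℚ) ^ (m - j) * (1 / N) ^ (m - j) * stirling1 (n + 1) (j + 1)) := by
          intro j hj
          have hjm : j < m := Finset.mem_range.mp hj
          have h1 : m + 1 - j = (m - j) + 1 := by omega
          rw [h1, pow_succ, pow_succ]
          field_simp
        rw [Finset.sum_congr rfl hmain]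
        rw [← Finset.sum_neg_distrib]
        ring
      -- put it together
      have hgoal := hs (m + 1)
      rw [expand, P1, P2, P3, P4]
      push_cast
      push_cast at hgoal
      rw [hgoal]
      ring

theorem harmonic_stirling_convolution (n k : ℕ) (hk : 1 ≤ k) :
    (k : ℚ) * stirling1 (n + 1) (k + 1) =
      -∑ j ∈ Finset.range k, (-1 : ℚ) ^ (k - j) * genH n (k - j) * stirling1 (n + 1) (j + 1) := by
  exact key_s3 n k
end

section
/- Let n be a nonnegative integer and let f_n be the real polynomial f_n(x) = ∏_{j=0}^{n-1} (x - j). Then for every integer m ≥ 1 and every real number x not belonging to {0, 1, ..., n-1}, one has m · (D^m f_n)(x) / m! = - Σ_{h=0}^{m-1} (-1)^(m-h) · ((D^h f_n)(x) / h!) · Σ_{j=0}^{n-1} 1/(x - j)^(m-h), where D^m f_n denotes the m-th derivative of the polynomial f_n. -/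
/-!
Write `f = ∏ j < n, (X - j)`. Since `(D^h f)(x) / h!` is the `h`-th Taylor coefficient of `f`
at `x` and `f(x + t) = ∏ j, (t + (x - j))`, Vieta's formulas give
`(D^h f)(x) / h! = e_{n-h}(x - j) = f(x) · e_h(1 / (x - j))`, where `e_h` is the elementary
symmetric function. The claimed identity is then `f(x)` times Newton's identity
`m e_m = -∑_{h<m} (-1)^(m-h) e_h p_{m-h}` for the numbers `y_j = 1 / (x - j)`, with power
sums `p_k = ∑_j y_j ^ k`.
-/

open Polynomial Finset

theorem neg_one_pow_succ_mul_neg_one_pow {R : Type*} [Ring R] {h k : ℕ} (hk : h ≤ k) :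
    (-1 : R) ^ (k + 1) * (-1) ^ h = -(-1) ^ (k - h) := by
  rw [← pow_add, show k + 1 + h = k - h + 2 * h + 1 by omega, pow_succ, pow_add, pow_mul]
  simp

namespace Finset

variable {ι : Type*}

theorem mul_esymm_eq_neg_sum_range {R : Type*} [CommRing R] (s : Finset ι) (y : ι → R)
    (k : ℕ) :
    k * (s.val.map y).esymm k =
      -∑ h ∈ range k, (-1) ^ (k - h) * (s.val.map y).esymm h * ∑ i ∈ s, y i ^ (k - h) := by
  have newton := congrArg (MvPolynomial.aeval fun i : s => y i)
    (MvPolynomial.mul_esymm_eq_sum s R k)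
  have hval : (univ : Finset s).val.map (fun i : s => y i) = s.val.map y := by
    rw [univ_eq_attach]
    exact Multiset.attach_map_val' _ _
  simp only [map_mul, map_natCast, map_sum, map_pow, map_neg, map_one, MvPolynomial.psum,
    MvPolynomial.aeval_esymm_eq_multiset_esymm, hval, MvPolynomial.aeval_X] at newton
  rw [newton, sum_filter, Nat.sum_antidiagonal_eq_sum_range_succ_mk, sum_range_succ,
    if_neg (lt_irrefl k), add_zero, mul_sum, ← sum_neg_distrib]
  refine sum_congr rfl fun h hh => ?_
  rw [if_pos (mem_range.1 hh), ← mul_assoc, ← mul_assoc,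
    neg_one_pow_succ_mul_neg_one_pow (mem_range.1 hh).le, neg_mul, neg_mul]
  exact congrArg _ (congrArg _ (sum_coe_sort s fun i => y i ^ (k - h)))

variable {K : Type*} [Field K]

theorem sum_powersetCard_card_sub_prod_eq_prod_mul_sum_prod_inv [DecidableEq ι] (s : Finset ι)
    (c : ι → K) (hc : ∀ i ∈ s, c i ≠ 0) {h : ℕ} (hh : h ≤ #s) :
    ∑ t ∈ s.powersetCard (#s - h), ∏ i ∈ t, c i =
      (∏ i ∈ s, c i) * ∑ t ∈ s.powersetCard h, ∏ i ∈ t, (c i)⁻¹ := by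
  rw [mul_sum]
  refine sum_nbij' (s \ ·) (s \ ·) ?_ ?_ ?_ ?_ ?_
  · intro t ht
    rw [mem_powersetCard] at ht ⊢
    exact ⟨sdiff_subset, by rw [card_sdiff_of_subset ht.1, ht.2]; omega⟩
  · intro t ht
    rw [mem_powersetCard] at ht ⊢
    exact ⟨sdiff_subset, by rw [card_sdiff_of_subset ht.1, ht.2]⟩
  · intro t ht
    exact sdiff_sdiff_eq_self (mem_powersetCard.1 ht).1
  · intro t ht
    exact sdiff_sdiff_eq_self (mem_powersetCard.1 ht).1
  · intro t ht
    rw [prod_inv_distrib, ← prod_sdiff (mem_powersetCard.1 ht).1, ← div_eq_mul_inv,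
      mul_div_cancel_left₀]
    exact prod_ne_zero_iff.2 fun i hi => hc i (mem_sdiff.1 hi).1

end Finset

namespace Polynomial

variable {ι : Type*}

theorem taylor_prod_X_sub_C {R : Type*} [CommRing R] (s : Finset ι) (a : ι → R) (x : R) :
    taylor x (∏ i ∈ s, (X - C (a i))) = ∏ i ∈ s, (X + C (x - a i)) := by
  change taylorAlgHom x _ = _
  rw [map_prod]
  refine prod_congr rfl fun i _ => ?_
  rw [map_sub, taylorAlgHom_apply, taylorAlgHom_apply, taylor_X, taylor_C, C_sub]
  ring

variable {K : Type*} [Field K]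

theorem coeff_prod_X_add_C_eq_prod_mul_esymm_inv (s : Finset ι) (c : ι → K)
    (hc : ∀ i ∈ s, c i ≠ 0) (h : ℕ) :
    (∏ i ∈ s, (X + C (c i))).coeff h =
      (∏ i ∈ s, c i) * (s.val.map fun i => (c i)⁻¹).esymm h := by
  classical
  rw [esymm_map_val]
  rcases le_or_gt h #s with hh | hh
  · rw [prod_X_add_C_coeff s c hh,
      sum_powersetCard_card_sub_prod_eq_prod_mul_sum_prod_inv s c hc hh]
  · rw [powersetCard_eq_empty.2 hh, sum_empty, mul_zero]
    refine coeff_eq_zero_of_natDegree_lt ?_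
    rwa [natDegree_prod_of_monic _ _ fun i _ => monic_X_add_C (c i),
      sum_congr rfl fun i _ => natDegree_X_add_C (c i), sum_const, smul_eq_mul, mul_one]

theorem eval_iterate_derivative_prod_X_sub_C (s : Finset ι) (a : ι → K) {x : K}
    (hx : ∀ i ∈ s, x ≠ a i) (h : ℕ) :
    (derivative^[h] (∏ i ∈ s, (X - C (a i)))).eval x =
      h.factorial * ((∏ i ∈ s, (x - a i)) * (s.val.map fun i => (x - a i)⁻¹).esymm h) := by
  rw [← factorial_smul_hasseDeriv, LinearMap.smul_apply, eval_smul, ← taylor_coeff,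
    taylor_prod_X_sub_C, nsmul_eq_mul,
    coeff_prod_X_add_C_eq_prod_mul_esymm_inv _ _ fun i hi => sub_ne_zero.2 (hx i hi)]

end Polynomial

theorem falling_factorial_derivative_convolution_general (n : ℕ) (m : ℕ) (x : ℝ)
    (hx : ∀ j < n, x ≠ (j : ℝ)) :
    (m : ℝ) * ((Polynomial.derivative^[m]
        (∏ j ∈ Finset.range n, (X - C (j : ℝ)))).eval x) / m.factorial =
      -∑ h ∈ Finset.range m, (-1 : ℝ) ^ (m - h) *
        ((Polynomial.derivative^[h]
            (∏ j ∈ Finset.range n, (X - C (j : ℝ)))).eval x / h.factorial) *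
        ∑ j ∈ Finset.range n, 1 / (x - j) ^ (m - h) := by
  set P := ∏ j ∈ range n, (x - j)
  set e := ((range n).val.map fun j : ℕ => (x - j)⁻¹).esymm
  have taylor_coeff_eq (h : ℕ) :
      (derivative^[h] (∏ j ∈ range n, (X - C (j : ℝ)))).eval x / h.factorial = P * e h := by
    rw [eval_iterate_derivative_prod_X_sub_C _ _ (fun j hj => hx j (mem_range.1 hj)),
      mul_div_cancel_left₀ _ (by positivity)]
  simp_rw [mul_div_assoc, taylor_coeff_eq, one_div, ← inv_pow]
  rw [mul_left_comm, mul_esymm_eq_neg_sum_range, mul_neg, mul_sum]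
  exact congrArg _ (sum_congr rfl fun h _ => by ring)

theorem falling_factorial_derivative_convolution (n : ℕ) (m : ℕ) (hm : 1 ≤ m) (x : ℝ)
    (hx : ∀ j < n, x ≠ (j : ℝ)) :
    (m : ℝ) * ((Polynomial.derivative^[m]
        (∏ j ∈ Finset.range n, (X - C (j : ℝ)))).eval x) / m.factorial =
      -∑ h ∈ Finset.range m, (-1 : ℝ) ^ (m - h) *
        ((Polynomial.derivative^[h]
            (∏ j ∈ Finset.range n, (X - C (j : ℝ)))).eval x / h.factorial) *
        ∑ j ∈ Finset.range n, 1 / (x - j) ^ (m - h) :=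
  falling_factorial_derivative_convolution_general n m x hx
end

section
/- Let p be an odd prime and k ≥ 0 an integer. Then G_{p-1}^(k) = (-1)^k · Σ_{j=0}^{p-1-k} (-1)^j · C(j+k, j) · G_{p-1}^(k+j) · p^j, where the equality holds in the rational numbers. -/
open Polynomial Finset

def genG (n k : ℕ) : ℚ :=
  ∑ s ∈ Finset.powersetCard k (Finset.range n), ∏ i ∈ s, (1 : ℚ) / (i + 1)

lemma genG_zero_of_lt {n k : ℕ} (h : n < k) : genG n k = 0 := by
  unfold genG
  rw [Finset.powersetCard_eq_empty.mpr (by simpa using h)]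
  simp

lemma prod_range_cast_factorial (n : ℕ) :
    (∏ i ∈ Finset.range n, ((i : ℚ) + 1)) = (n.factorial : ℚ) := by
  rw [← Finset.prod_range_add_one_eq_factorial]
  push_cast
  rfl

lemma coeff_P (n k : ℕ) (hk : k ≤ n) :
    (∏ i ∈ Finset.range n, (X + C ((i : ℚ) + 1))).coeff k
      = (n.factorial : ℚ) * genG n k := by
  rw [Finset.prod_X_add_C_coeff _ _ (by simpa using hk)]
  unfold genG
  rw [Finset.mul_sum]
  refine Finset.sum_nbij' (fun t => Finset.range n \ t) (fun t => Finset.range n \ t)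
    ?_ ?_ ?_ ?_ ?_
  · intro t ht
    rw [Finset.mem_powersetCard] at ht ⊢
    refine ⟨Finset.sdiff_subset, ?_⟩
    rw [Finset.card_sdiff_of_subset ht.1, ht.2, Finset.card_range]
    omega
  · intro t ht
    rw [Finset.mem_powersetCard] at ht ⊢
    refine ⟨Finset.sdiff_subset, ?_⟩
    rw [Finset.card_sdiff_of_subset ht.1, ht.2, Finset.card_range]
  · intro t ht
    rw [Finset.mem_powersetCard] at ht
    exact Finset.sdiff_sdiff_eq_self ht.1
  · intro t ht
    rw [Finset.mem_powersetCard] at ht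
    exact Finset.sdiff_sdiff_eq_self ht.1
  · intro t ht
    rw [Finset.mem_powersetCard] at ht
    have h1 : (∏ i ∈ Finset.range n \ t, ((i : ℚ) + 1)) * ∏ i ∈ t, ((i : ℚ) + 1)
        = (n.factorial : ℚ) := by
      rw [Finset.prod_sdiff ht.1, prod_range_cast_factorial]
    have h2 : (∏ i ∈ Finset.range n \ t, ((i : ℚ) + 1)) ≠ 0 := by
      refine Finset.prod_ne_zero_iff.mpr fun i _ => ?_
      positivity
    have h3 : (∏ i ∈ Finset.range n \ t, (1 : ℚ) / ((i : ℚ) + 1))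
        = (∏ i ∈ Finset.range n \ t, ((i : ℚ) + 1))⁻¹ := by
      rw [← Finset.prod_inv_distrib]
      exact Finset.prod_congr rfl fun i _ => one_div _
    rw [h3]
    field_simp
    linarith [h1]

lemma sym_P (p : ℕ) (hp : 0 < p) (heven : Even (p - 1)) :
    (∏ i ∈ Finset.range (p - 1), (X + C ((i : ℚ) + 1))).comp (-(X + C (p : ℚ)))
      = ∏ i ∈ Finset.range (p - 1), (X + C ((i : ℚ) + 1)) := by
  set n := p - 1 with hn
  rw [Polynomial.prod_comp]
  have : ∀ i ∈ Finset.range n, (X + C ((i : ℚ) + 1)).comp (-(X + C (p : ℚ)))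
      = -(X + C (((n - 1 - i : ℕ) : ℚ) + 1)) := by
    intro i hi
    rw [Finset.mem_range] at hi
    have hcast : ((n - 1 - i : ℕ) : ℚ) = (n : ℚ) - 1 - i := by
      have h1 : (n - 1 - i) + (i + 1) = n := by omega
      have h2 := congrArg (Nat.cast : ℕ → ℚ) h1
      push_cast at h2
      linarith
    have hnp : (n : ℚ) = (p : ℚ) - 1 := by
      rw [hn]; push_cast [hp]; ring
    have harg : ((n - 1 - i : ℕ) : ℚ) + 1 = (p : ℚ) - ((i : ℚ) + 1) := by
      rw [hcast, hnp]; ring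
    simp only [add_comp, X_comp, C_comp, harg, C_sub]
    ring
  rw [Finset.prod_congr rfl this,
    Finset.prod_congr rfl (fun x _ => (neg_one_mul (X + C (((n - 1 - x : ℕ) : ℚ) + 1))).symm),
    Finset.prod_mul_distrib, Finset.prod_const, Finset.card_range, heven.neg_one_pow, one_mul]
  exact Finset.prod_range_reflect (fun i => X + C ((i : ℚ) + 1)) n

theorem genG_padic_expansion (p : ℕ) (hp : p.Prime) (hodd : Odd p) (k : ℕ) :
    genG (p - 1) k =
      (-1 : ℚ) ^ k * ∑ j ∈ Finset.range (p - 1 - k + 1),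
        (-1 : ℚ) ^ j * ((j + k).choose j) * genG (p - 1) (k + j) * (p : ℚ) ^ j := by
  rcases lt_or_ge (p - 1) k with h | hk
  · have h0 : p - 1 - k = 0 := by omega
    rw [h0, genG_zero_of_lt h]
    simp [Finset.sum_range_one, genG_zero_of_lt h]
  · set n := p - 1 with hn
    have hp1 : 0 < p := hp.pos
    have heven : Even n := Nat.Odd.sub_odd hodd odd_one
    set P : ℚ[X] := ∏ i ∈ Finset.range n, (X + C ((i : ℚ) + 1)) with hP
    have hdeg : P.natDegree = n := by
      rw [hP, Polynomial.natDegree_prod_of_monic _ _ (fun i _ => monic_X_add_C _)]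
      simp only [natDegree_X_add_C, Finset.sum_const, smul_eq_mul, mul_one, Finset.card_range]
    have hsym := sym_P p hp1 heven
    rw [← hn, ← hP] at hsym
    have hsum : (∑ i ∈ Finset.range (n + 1), C (P.coeff i) * X ^ i).comp
          (-(X + C (p : ℚ)))
        = ∑ i ∈ Finset.range (n + 1), C (P.coeff i) * (-(X + C (p : ℚ))) ^ i := by
      simp [Polynomial.comp, Polynomial.eval₂_finset_sum]
    have hc : (P.comp (-(X + C (p : ℚ)))).coeff k
        = ∑ m ∈ Finset.range (n + 1),
            P.coeff m * ((-1 : ℚ) ^ m * (p : ℚ) ^ (m - k) * (m.choose k : ℚ)) := by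
      conv_lhs => rw [P.as_sum_range_C_mul_X_pow, hdeg]
      rw [hsum, Polynomial.finset_sum_coeff]
      refine Finset.sum_congr rfl fun m _ => ?_
      have h1 : (-(X + C (p : ℚ))) ^ m = C ((-1 : ℚ) ^ m) * (X + C (p : ℚ)) ^ m := by
        rw [neg_pow]
        congr 1
        simp [map_pow]
      rw [h1, ← mul_assoc, ← map_mul, coeff_C_mul, coeff_X_add_C_pow]
      ring
    have key : P.coeff k
        = ∑ m ∈ Finset.range (n + 1),
            P.coeff m * ((-1 : ℚ) ^ m * (p : ℚ) ^ (m - k) * (m.choose k : ℚ)) := by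
      conv_lhs => rw [← hsym]
      exact hc
    have hfac : ((n.factorial : ℚ)) ≠ 0 := by
      exact_mod_cast n.factorial_ne_zero
    apply mul_left_cancel₀ hfac
    rw [← coeff_P n k hk, key,
      ← Finset.sum_range_add_sum_Ico _ (show k ≤ n + 1 by omega)]
    have hz : ∑ m ∈ Finset.range k,
        P.coeff m * ((-1 : ℚ) ^ m * (p : ℚ) ^ (m - k) * (m.choose k : ℚ)) = 0 := by
      refine Finset.sum_eq_zero fun m hm => ?_
      rw [Finset.mem_range] at hm
      rw [Nat.choose_eq_zero_of_lt hm]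
      simp
    rw [hz, zero_add, Finset.sum_Ico_eq_sum_range,
      show n + 1 - k = n - k + 1 by omega]
    have hterm : ∀ j ∈ Finset.range (n - k + 1),
        P.coeff (k + j) * ((-1 : ℚ) ^ (k + j) * (p : ℚ) ^ (k + j - k) * (((k + j).choose k : ℚ)))
          = (n.factorial : ℚ) *
              ((-1 : ℚ) ^ k *
                ((-1 : ℚ) ^ j * (((j + k).choose j : ℚ)) * genG n (k + j) * (p : ℚ) ^ j)) := by
      intro j hj
      rw [Finset.mem_range] at hj
      rw [coeff_P n (k + j) (by omega)]
      have h2 : k + j - k = j := by omega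
      have h3 : (((k + j).choose k : ℚ)) = (((j + k).choose j : ℚ)) := by
        rw [Nat.choose_symm_add, Nat.add_comm k j]
      rw [h2, h3, pow_add]
      ring
    rw [Finset.sum_congr rfl hterm, ← Finset.mul_sum, ← Finset.mul_sum]
end

section
/- Let p be an odd prime. Then Σ_{j=0}^{p-2} (-1)^j · G_{p-1}^(j+1) · p^j = 0, where the equality holds in the rational numbers. -/
open Finset

theorem sum_genG_mul_pow (n : ℕ) (x : ℚ) :
    ∑ k ∈ range (n + 1), genG n k * x ^ k = ∏ i ∈ range n, (1 + x / (i + 1)) := by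
  rw [prod_one_add, sum_powerset, card_range]
  refine sum_congr rfl fun k _ => ?_
  rw [genG, sum_mul]
  refine sum_congr rfl fun t ht => ?_
  rw [← (mem_powersetCard.1 ht).2, ← prod_const, ← prod_mul_distrib]
  exact prod_congr rfl fun i _ => by ring

theorem genG_zero (n : ℕ) : genG n 0 = 1 := by
  simp [genG]

theorem sum_genG_succ_mul_pow (n : ℕ) (x : ℚ) :
    ∑ j ∈ range n, genG n (j + 1) * x ^ (j + 1) = ∏ i ∈ range n, (1 + x / (i + 1)) - 1 := by
  rw [← sum_genG_mul_pow, sum_range_succ', genG_zero, pow_zero, one_mul, add_sub_cancel_right]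

theorem prod_one_sub_succ_div_succ (n : ℕ) :
    ∏ i ∈ range n, (1 - ((n : ℚ) + 1) / (i + 1)) = (-1) ^ n := by
  have hfactor : ∀ i ∈ range n,
      1 - ((n : ℚ) + 1) / (i + 1) = -1 * (((n - i : ℕ) : ℚ) / ((i + 1 : ℕ) : ℚ)) := by
    intro i hi
    rw [Nat.cast_sub (mem_range.1 hi).le]
    field_simp
    push_cast
    ring
  have hfact : (∏ i ∈ range n, ((n - i : ℕ) : ℚ)) = ∏ i ∈ range n, ((i + 1 : ℕ) : ℚ) := by
    rw [← Nat.cast_prod, ← Nat.cast_prod, ← Nat.descFactorial_eq_prod_range,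
      Nat.descFactorial_self, Nat.factorial_eq_prod_range_add_one]
  rw [prod_congr rfl hfactor, prod_mul_distrib, prod_const, card_range, prod_div_distrib, hfact,
    div_self (prod_ne_zero_iff.2 fun i _ => by positivity), mul_one]

theorem genG_alternating_sum_eq_zero_general (p : ℕ) (hodd : Odd p) :
    ∑ j ∈ Finset.range (p - 1), (-1 : ℚ) ^ j * genG (p - 1) (j + 1) * (p : ℚ) ^ j = 0 := by
  obtain ⟨n, rfl⟩ : ∃ n, p = n + 1 := ⟨p - 1, (Nat.succ_pred_eq_of_pos hodd.pos).symm⟩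
  have hn : Even n := by simpa [Nat.odd_add_one] using hodd
  have hsum := sum_genG_succ_mul_pow n (-((n : ℚ) + 1))
  simp only [neg_div, ← sub_eq_add_neg] at hsum
  rw [prod_one_sub_succ_div_succ, hn.neg_one_pow, sub_self] at hsum
  have hterm : ∀ j, genG n (j + 1) * (-((n : ℚ) + 1)) ^ (j + 1)
      = -((n : ℚ) + 1) * ((-1) ^ j * genG n (j + 1) * ((n : ℚ) + 1) ^ j) := by
    intro j
    rw [pow_succ, neg_pow]
    ring
  rw [sum_congr rfl fun j _ => hterm j, ← mul_sum, mul_eq_zero] at hsum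
  simpa using hsum.resolve_left (neg_ne_zero.2 (by positivity))

theorem genG_alternating_sum_eq_zero (p : ℕ) (hp : p.Prime) (hodd : Odd p) :
    ∑ j ∈ Finset.range (p - 1), (-1 : ℚ) ^ j * genG (p - 1) (j + 1) * (p : ℚ) ^ j = 0 :=
  genG_alternating_sum_eq_zero_general p hodd
end

section
/- Let p be an odd prime and i ≥ 1 an integer. Then Σ_{j=0}^{p-2i} B_j · C(j+2i-1, j) · [p, j+2i] · p^j = 0, where the equality holds in the rational numbers (the sum is finite since [p, m] = 0 for m > p). -/
/-!
Put `G(x) = ∏_{j<p} (p x + j) / x = ∑_k [p, k+1] p^(k+1) x^k`; as `p - 1` is even,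
`G(-1 - x) = G(x)`. The Bernoulli transform `W = ∑_k G_k B_k(x)` solves
`W(x + 1) - W(x) = G'(x)`, and by the symmetry of `G` so does `W(-x)`. A polynomial solution of
this difference equation is determined by its value at `0`, so `W` is even. Its coefficient of
`x^(2i-1)`, which must vanish, is `p^(2i)` times the sum in question.
-/

theorem stirling1_eq_stirlingFirst : ∀ n k, stirling1 n k = Nat.stirlingFirst n k
  | 0, 0 | 0, _ + 1 | _ + 1, 0 => rfl
  | n + 1, k + 1 => by
    rw [stirling1, Nat.stirlingFirst_succ_succ, stirling1_eq_stirlingFirst n,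
      stirling1_eq_stirlingFirst n]

namespace Polynomial

theorem coeff_ascPochhammer {S : Type*} [Semiring S] (n k : ℕ) :
    (ascPochhammer S n).coeff k = Nat.stirlingFirst n k := by
  induction n generalizing k with
  | zero => cases k <;> simp [coeff_one]
  | succ n ih =>
    rw [ascPochhammer_succ_right, mul_add, coeff_add, ← C_eq_natCast, coeff_mul_C, ih]
    cases k with
    | zero => cases n <;> simp
    | succ k =>
      rw [coeff_mul_X, Nat.stirlingFirst_succ_succ]
      push_cast
      rw [Nat.cast_comm, add_comm, ih]

theorem ascPochhammer_comp_neg_X_sub {R : Type*} [CommRing R] (n : ℕ) :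
    (ascPochhammer R n).comp (-X - (n : R[X])) = (-1) ^ n * (ascPochhammer R n).comp (X + 1) := by
  induction n with
  | zero => simp
  | succ n ih =>
    conv_lhs => rw [ascPochhammer_succ_left, mul_comp, X_comp, comp_assoc,
      show (X + 1 : R[X]).comp (-X - ((n + 1 : ℕ) : R[X])) = -X - (n : R[X]) by
        simp only [add_comp, X_comp, one_comp]; push_cast; ring, ih]
    rw [ascPochhammer_succ_right, mul_comp, add_comp, X_comp, natCast_comp]
    push_cast; ring

theorem eq_C_eval_zero_of_comp_X_add_one_eq {R : Type*} [CommRing R] [IsDomain R] [CharZero R]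
    {P : R[X]} (h : P.comp (X + 1) = P) : P = C (P.eval 0) := by
  have hroots (n : ℕ) : (P - C (P.eval 0)).IsRoot n := by
    induction n with
    | zero => simp
    | succ n ih =>
      have hstep : P.eval ((n : R) + 1) = P.eval (n : R) := by
        simpa using congrArg (eval (n : R)) h
      simpa [hstep] using ih
  exact sub_eq_zero.1 <| eq_zero_of_infinite_isRoot _ <|
    Set.infinite_of_injective_forall_mem Nat.cast_injective hroots

theorem coeff_eq_zero_of_comp_neg_X_eq {R : Type*} [Ring R] [NoZeroDivisors R] [CharZero R]
    {P : R[X]} (hP : P.comp (-X) = P) {m : ℕ} (hm : Odd m) : P.coeff m = 0 := by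
  have h := congrArg (coeff · m) hP
  rw [show (-X : R[X]) = C (-1) * X by simp, comp_C_mul_X_coeff, hm.neg_one_pow, mul_neg_one] at h
  exact self_eq_neg.1 h.symm

end Polynomial

section

open Polynomial

noncomputable def bernoulliTransform (P : ℚ[X]) : ℚ[X] :=
  P.sum fun k a => C a * Polynomial.bernoulli k

theorem bernoulliTransform_comp_X_add_one_sub (P : ℚ[X]) :
    (bernoulliTransform P).comp (X + 1) - bernoulliTransform P = derivative P := by
  simp only [bernoulliTransform, Polynomial.sum_def, sum_comp, mul_comp, C_comp,
    ← Finset.sum_sub_distrib, ← mul_sub, add_comm X, bernoulli_comp_one_add_X,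
    add_sub_cancel_left, derivative_apply]
  refine Finset.sum_congr rfl fun k _ => ?_
  rw [nsmul_eq_mul, ← C_eq_natCast, ← mul_assoc, ← C_mul]

theorem coeff_bernoulliTransform {P : ℚ[X]} {m N : ℕ} (hP : P.natDegree < m + N) :
    (bernoulliTransform P).coeff m =
      ∑ j ∈ Finset.range N, _root_.bernoulli j * (j + m).choose j * P.coeff (j + m) := by
  rw [bernoulliTransform, sum_over_range' _ (by simp) _ hP, finsetSum_coeff,
    Finset.sum_range_add, Finset.sum_eq_zero fun k hk => ?_, zero_add]
  · refine Finset.sum_congr rfl fun j _ => ?_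
    rw [coeff_C_mul, coeff_bernoulli, if_pos (by omega), add_comm m j, Nat.add_sub_cancel,
      Nat.choose_symm_add]
    ring
  · rw [coeff_C_mul, coeff_bernoulli, if_neg (by simp at hk; omega), mul_zero]

theorem bernoulliTransform_comp_neg_X {G : ℚ[X]} (hG : G.comp (-1 - X) = G) :
    (bernoulliTransform G).comp (-X) = bernoulliTransform G := by
  set W := bernoulliTransform G
  have hW := bernoulliTransform_comp_X_add_one_sub G
  have hG' : derivative G = -(derivative G).comp (-1 - X) := by
    conv_lhs => rw [← hG]
    simp [derivative_comp]
  have hreflect : (W.comp (-X)).comp (X + 1) - W.comp (-X) = derivative G := by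
    calc (W.comp (-X)).comp (X + 1) - W.comp (-X) = -(W.comp (X + 1) - W).comp (-1 - X) := by
          simp only [comp_assoc, sub_comp, add_comp, neg_comp, X_comp, one_comp]
          ring_nf
      _ = derivative G := by rw [hW, ← hG']
  have hperiodic : (W.comp (-X) - W).comp (X + 1) = W.comp (-X) - W := by
    rw [sub_comp]; linear_combination hreflect - hW
  exact sub_eq_zero.1 (by simpa using eq_C_eval_zero_of_comp_X_add_one_eq hperiodic)

section ScaledPochhammer

variable (R : Type*) [CommRing R]

noncomputable def scaledPochhammerDivX (n : ℕ) : R[X] :=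
  C ((n + 1 : ℕ) : R) * (ascPochhammer R n).comp (C ((n + 1 : ℕ) : R) * X + 1)

variable {R}

theorem X_mul_scaledPochhammerDivX (n : ℕ) :
    X * scaledPochhammerDivX R n = (ascPochhammer R (n + 1)).comp (C ((n + 1 : ℕ) : R) * X) := by
  rw [scaledPochhammerDivX, ascPochhammer_succ_left, mul_comp, X_comp, comp_assoc, add_comp,
    X_comp, one_comp]
  ring

theorem coeff_scaledPochhammerDivX (n k : ℕ) :
    (scaledPochhammerDivX R n).coeff k =
      Nat.stirlingFirst (n + 1) (k + 1) * ((n + 1 : ℕ) : R) ^ (k + 1) := by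
  rw [← coeff_X_mul, X_mul_scaledPochhammerDivX, comp_C_mul_X_coeff, coeff_ascPochhammer]

theorem natDegree_scaledPochhammerDivX_le (n : ℕ) : (scaledPochhammerDivX R n).natDegree ≤ n :=
  natDegree_le_iff_coeff_eq_zero.2 fun k hk => by
    rw [coeff_scaledPochhammerDivX, Nat.stirlingFirst_eq_zero_of_lt (by omega), Nat.cast_zero,
      zero_mul]

theorem scaledPochhammerDivX_comp_neg_one_sub_X {n : ℕ} (hn : Even n) :
    (scaledPochhammerDivX R n).comp (-1 - X) = scaledPochhammerDivX R n := by
  have hreflect : (C ((n + 1 : ℕ) : R) * X + 1).comp (-1 - X) =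
      (-X - (n : R[X])).comp (C ((n + 1 : ℕ) : R) * X) := by
    simp only [add_comp, sub_comp, neg_comp, mul_comp, X_comp, one_comp, natCast_comp,
      C_eq_natCast]
    push_cast
    ring
  rw [scaledPochhammerDivX, mul_comp, C_comp, comp_assoc, hreflect, ← comp_assoc,
    ascPochhammer_comp_neg_X_sub, hn.neg_one_pow, one_mul, comp_assoc, add_comp, X_comp, one_comp]

end ScaledPochhammer

end

theorem bernoulli_stirling1_sum_eq_zero_general (p : ℕ) (hodd : Odd p)
    (i : ℕ) (hi : 1 ≤ i) :
    ∑ j ∈ Finset.range (p - 2 * i + 1),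
      bernoulli j * ((j + 2 * i - 1).choose j) * stirling1 p (j + 2 * i) * (p : ℚ) ^ j
      = 0 := by
  obtain ⟨n, rfl⟩ := hodd
  have hsymm := bernoulliTransform_comp_neg_X
    (scaledPochhammerDivX_comp_neg_one_sub_X (R := ℚ) (even_two_mul n))
  have hcoeff := Polynomial.coeff_eq_zero_of_comp_neg_X_eq hsymm (m := 2 * i - 1)
    (Nat.odd_iff.2 (by omega))
  rw [coeff_bernoulliTransform (N := 2 * n + 1 - 2 * i + 1)
    ((natDegree_scaledPochhammerDivX_le _).trans_lt (by omega))] at hcoeff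
  have hscaled : ((2 * n + 1 : ℕ) : ℚ) ^ (2 * i) *
      ∑ j ∈ Finset.range (2 * n + 1 - 2 * i + 1), bernoulli j * ((j + 2 * i - 1).choose j) *
        stirling1 (2 * n + 1) (j + 2 * i) * ((2 * n + 1 : ℕ) : ℚ) ^ j = 0 := by
    rw [Finset.mul_sum, ← hcoeff]
    refine Finset.sum_congr rfl fun j _ => ?_
    rw [coeff_scaledPochhammerDivX, stirling1_eq_stirlingFirst,
      show j + (2 * i - 1) + 1 = j + 2 * i by omega, show j + (2 * i - 1) = j + 2 * i - 1 by omega,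
      pow_add]
    ring
  exact (mul_eq_zero.1 hscaled).resolve_left (by positivity)

theorem bernoulli_stirling1_sum_eq_zero (p : ℕ) (hp : p.Prime) (hodd : Odd p)
    (i : ℕ) (hi : 1 ≤ i) :
    ∑ j ∈ Finset.range (p - 2 * i + 1),
      bernoulli j * ((j + 2 * i - 1).choose j) * stirling1 p (j + 2 * i) * (p : ℚ) ^ j
      = 0 :=
  bernoulli_stirling1_sum_eq_zero_general p hodd i hi
end

section
/- For all nonnegative integers n and k such that n - k is odd, the Bernoulli–Stirling number of the first kind vanishes: A_{n,k} = 0. -/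
/-- Generalized binomial coefficient with integer top: `C(a,b) = a(a-1)⋯(a-b+1)/b!`. -/
def intChoose (a : ℤ) (b : ℕ) : ℚ :=
  (∏ i ∈ Finset.range b, ((a : ℚ) - i)) / b.factorial

/-- Bernoulli–Stirling numbers of the first kind. -/
def bsA (n k : ℕ) : ℚ :=
  ∑ h ∈ Finset.range (n + 1),
    bernoulli h * intChoose ((k : ℤ) + h - 1) h * stirling1 n (h + k) * (n : ℚ) ^ h

/-!
Let `L_c` be the linear functional on `ℚ[X]` with `L_c(Xʰ) = Bₕ cʰ`. Since
`∑ᵢ C(j, i) Bᵢ = (-1)ʲ Bⱼ`, `L_c` is invariant under the reflection `p(X) ↦ p(-X - c)`, so it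
vanishes on every polynomial that this reflection negates. For `n, k ≥ 1` one has
`A_{n,k} = L_n(q) / (k-1)!`, where `q` is the `(k-1)`-st derivative of
`(X + 1)(X + 2)⋯(X + n - 1)`, whose coefficients are the Stirling numbers `[n, m + 1]`.
The reflection with `c = n` maps this product to `(-1)ⁿ⁻¹` times itself, hence maps `q` to
`(-1)ⁿ⁻ᵏ q = -q`. The cases `n = 0` and `k = 0` are immediate.
-/

open Polynomial hiding bernoulli
open Finset
open scoped Nat

theorem sum_range_succ_choose_mul_bernoulli (j : ℕ) :
    ∑ i ∈ range (j + 1), (j.choose i : ℚ) * bernoulli i = (-1) ^ j * bernoulli j := by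
  rw [← bernoulli'_eq_bernoulli, ← Polynomial.bernoulli_eval_one]
  simp [Polynomial.bernoulli, eval_finsetSum, mul_comm]

/-- The umbral evaluation `Xʰ ↦ Bₕ cʰ`. -/
noncomputable def bernoulliFunctional (c : ℚ) : ℚ[X] →ₗ[ℚ] ℚ :=
  lsum fun h => (bernoulli h * c ^ h) • LinearMap.id

theorem bernoulliFunctional_monomial (c a : ℚ) (j : ℕ) :
    bernoulliFunctional c (monomial j a) = bernoulli j * c ^ j * a := by
  simp [bernoulliFunctional, lsum_apply]

theorem bernoulliFunctional_eq_sum_range (c : ℚ) {p : ℚ[X]} {N : ℕ} (hp : p.natDegree < N) :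
    bernoulliFunctional c p = ∑ h ∈ range N, bernoulli h * c ^ h * p.coeff h := by
  simpa [bernoulliFunctional, lsum_apply] using sum_over_range' p (by simp) N hp

theorem bernoulliFunctional_X_add_C_pow (c : ℚ) (j : ℕ) :
    bernoulliFunctional c ((X + C c) ^ j) = (-1) ^ j * bernoulli j * c ^ j := by
  have hdeg : ((X + C c) ^ j).natDegree < j + 1 := by
    rw [natDegree_pow, natDegree_X_add_C]; omega
  rw [bernoulliFunctional_eq_sum_range c hdeg, ← sum_range_succ_choose_mul_bernoulli, sum_mul]
  refine sum_congr rfl fun i hi => ?_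
  rw [coeff_X_add_C_pow, ← pow_sub_mul_pow c (Nat.le_of_lt_succ (mem_range.mp hi))]
  ring

theorem bernoulliFunctional_comp_neg_X_sub_C (c : ℚ) (p : ℚ[X]) :
    bernoulliFunctional c (p.comp (-X - C c)) = bernoulliFunctional c p := by
  induction p using Polynomial.induction_on' with
  | add p q hp hq => rw [add_comp, map_add, hp, hq, map_add]
  | monomial j a =>
    have h : (-X - C c) ^ j = C ((-1) ^ j) * (X + C c) ^ j := by
      rw [map_pow, map_neg, map_one, ← mul_pow]; ring
    rw [monomial_comp, h, ← mul_assoc, ← map_mul, ← smul_eq_C_mul, map_smul,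
      bernoulliFunctional_X_add_C_pow, bernoulliFunctional_monomial, smul_eq_mul]
    have hsq : ((-1 : ℚ) ^ j) * (-1) ^ j = 1 := by rw [← mul_pow]; norm_num
    linear_combination (bernoulli j * c ^ j * a) * hsq

theorem bernoulliFunctional_eq_zero_of_comp_neg_X_sub_C_eq_neg (c : ℚ) {p : ℚ[X]}
    (hp : p.comp (-X - C c) = -p) : bernoulliFunctional c p = 0 := by
  have := bernoulliFunctional_comp_neg_X_sub_C c p
  rw [hp, map_neg] at this
  linarith

theorem coeff_ascPochhammer (S : Type*) [Semiring S] (n m : ℕ) :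
    (ascPochhammer S n).coeff m = stirling1 n m := by
  induction n generalizing m with
  | zero => cases m <;> simp [stirling1, coeff_one]
  | succ n ih =>
    rw [ascPochhammer_succ_right, mul_add, coeff_add, ← C_eq_natCast, coeff_mul_C]
    cases m with
    | zero => rcases n with _ | n <;> simp [ih, stirling1]
    | succ m =>
      rw [coeff_mul_X, ih, ih, stirling1, Nat.cast_add, Nat.cast_mul, Nat.cast_comm, add_comm]

theorem coeff_ascPochhammer_comp_X_add_one (S : Type*) [CommSemiring S] (n m : ℕ) :
    ((ascPochhammer S n).comp (X + 1)).coeff m = stirling1 (n + 1) (m + 1) := by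
  rw [← coeff_X_mul, ← ascPochhammer_succ_left, coeff_ascPochhammer]

theorem ascPochhammer_comp_X_add_one_comp_neg_X_sub_C (R : Type*) [CommRing R] (n : ℕ) :
    ((ascPochhammer R n).comp (X + 1)).comp (-X - C ((n : R) + 1)) =
      (-1) ^ n * (ascPochhammer R n).comp (X + 1) := by
  have h := ascPochhammer_eval_neg_eq_descPochhammer R[X] (X + (n : R[X])) n
  rw [descPochhammer_eval_eq_ascPochhammer, add_sub_cancel_right, ascPochhammer_eval₂ C,
    ascPochhammer_eval₂ C] at h
  change (ascPochhammer R n).comp _ = _ * (ascPochhammer R n).comp _ at h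
  rw [comp_assoc, ← h]
  congr 1
  simp only [add_comp, X_comp, one_comp, map_add, map_one, map_natCast]
  ring

theorem iterate_derivative_comp_neg_X_sub_C {R : Type*} [CommRing R] (c : R) (p : R[X]) (k : ℕ) :
    derivative^[k] (p.comp (-X - C c)) = (-1) ^ k * (derivative^[k] p).comp (-X - C c) := by
  induction k generalizing p with
  | zero => simp
  | succ k ih => simp [ih (derivative p), derivative_comp, pow_succ]

theorem iterate_derivative_comp_neg_X_sub_C_of_comp_eq {R : Type*} [CommRing R] {c : R}
    {p : R[X]} {m : ℕ} (hp : p.comp (-X - C c) = (-1) ^ m * p) (k : ℕ) :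
    (derivative^[k] p).comp (-X - C c) = (-1) ^ (m + k) * derivative^[k] p := by
  have h := iterate_derivative_comp_neg_X_sub_C c p k
  rw [hp, show ((-1) ^ m : R[X]) = ((-1 : ℤ) ^ m : ℤ) by push_cast; rfl,
    iterate_derivative_intCast_mul] at h
  push_cast at h
  have hsq : ((-1 : R[X]) ^ k) * (-1) ^ k = 1 := by rw [← mul_pow]; simp
  linear_combination (-(-1) ^ k) * h - (derivative^[k] p).comp (-X - C c) * hsq

theorem intChoose_natCast (m b : ℕ) : intChoose m b = m.choose b := by
  rw [intChoose, Int.cast_natCast, ← descPochhammer_eval_eq_prod_range,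
    descPochhammer_eval_eq_descFactorial, Nat.descFactorial_eq_factorial_mul_choose, Nat.cast_mul,
    mul_div_cancel_left₀ _ (by positivity)]

theorem bsA_zero_succ (k : ℕ) : bsA 0 (k + 1) = 0 := by
  simp [bsA, stirling1]

theorem bsA_succ_zero (n : ℕ) : bsA (n + 1) 0 = 0 := by
  refine sum_eq_zero fun h _ => ?_
  rcases h with _ | h
  · simp [stirling1]
  · rw [show ((0 : ℕ) : ℤ) + (h + 1 : ℕ) - 1 = (h : ℕ) by push_cast; ring, intChoose_natCast,
      Nat.choose_eq_zero_of_lt h.lt_succ_self]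
    simp

theorem bsA_succ_succ (n k : ℕ) :
    bsA (n + 1) (k + 1) = bernoulliFunctional (n + 1)
      (derivative^[k] ((ascPochhammer ℚ n).comp (X + 1))) / (k ! : ℚ) := by
  have hdeg : (derivative^[k] ((ascPochhammer ℚ n).comp (X + 1))).natDegree < n + 2 := by
    have := natDegree_iterate_derivative ((ascPochhammer ℚ n).comp (X + 1)) k
    have h1 : (X + 1 : ℚ[X]).natDegree = 1 := by simpa using natDegree_X_add_C (1 : ℚ)
    rw [natDegree_comp, ascPochhammer_natDegree, h1] at this
    omega
  rw [bernoulliFunctional_eq_sum_range _ hdeg, sum_div]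
  refine sum_congr rfl fun h _ => ?_
  rw [coeff_iterate_derivative, coeff_ascPochhammer_comp_X_add_one,
    show ((k + 1 : ℕ) : ℤ) + h - 1 = (h + k : ℕ) by push_cast; ring, intChoose_natCast,
    Nat.descFactorial_eq_factorial_mul_choose, Nat.choose_symm_add, nsmul_eq_mul]
  push_cast
  field_simp
  rw [add_assoc]

theorem bsA_eq_zero_of_odd (n k : ℕ) (h : Odd ((n : ℤ) - k)) : bsA n k = 0 := by
  rcases n with _ | n
  · rcases k with _ | k
    · simp at h
    · exact bsA_zero_succ k
  rcases k with _ | k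
  · exact bsA_succ_zero n
  have hodd : Odd (n + k) := by
    rw [Int.odd_iff] at h
    rw [Nat.odd_iff]
    omega
  have hsym := iterate_derivative_comp_neg_X_sub_C_of_comp_eq
    (ascPochhammer_comp_X_add_one_comp_neg_X_sub_C ℚ n) k
  rw [hodd.neg_one_pow, neg_one_mul] at hsym
  rw [bsA_succ_succ, bernoulliFunctional_eq_zero_of_comp_neg_X_sub_C_eq_neg _ hsym, zero_div]
end

section
/- For all nonnegative integers n and k, the Bernoulli–Stirling number of the first kind A_{n,k} is an integer, i.e. the rational number A_{n,k} lies in ℤ. -/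
/-!
Write `n = ν + 1`, `k = j + 1` (the cases `n = 0`, `k = 0` are immediate) and let `F` be the
`j`-th Hasse derivative of `(X + 1)(X + 2)⋯(X + ν)`, whose coefficients are
`C(h + j, j) [n, h + j + 1]`. Then `A_{n,k} = Σ_h B_h F_h n^h` is the umbral value `F(nB)`, which by
Faulhaber's formula is the linear coefficient of the polynomial `G` with `G(N) = Σ_{u<N} F(nu)`.
As `G(0) = 0`, this coefficient is the value at `0` of `G(x)/x`, an integer as soon as `N ∣ G(N)`
for every `N ≥ 1`, because `Δ^{deg + 1}` kills a polynomial: its value at `0` is an integer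
combination of its values at `1, …, deg + 1`.

The divisibility `N ∣ G(N)` comes from `n F(x) = Q(x + 1) - Q(x)`, with `Q` the `j`-th Hasse
derivative of `x(x + 1)⋯(x + ν)`. If `gcd(n, N) = 1`, then `u ↦ nu` permutes `ℤ/N`, and the sum
of `F` over `ℤ/N` telescopes to `0`. Otherwise `N = e N'` with `e = gcd(n, N) > 1`, and `u ↦ F(nu)`
is `N'`-periodic modulo `N`, so `G(N) ≡ e G(N') ≡ 0 (mod e N')` by induction.
-/

open Finset Polynomial

theorem Function.Periodic.sum_range_mul {M : Type*} [AddCommMonoid M] {f : ℕ → M} {t : ℕ}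
    (hf : Function.Periodic f t) (m : ℕ) :
    ∑ u ∈ range (m * t), f u = m • ∑ u ∈ range t, f u := by
  induction m with
  | zero => simp
  | succ m ih =>
    rw [add_mul, one_mul, sum_range_add, ih, succ_nsmul]
    exact congrArg _ (sum_congr rfl fun u _ => by rw [add_comm]; exact hf.nat_mul m u)

theorem ZMod.sum_range_natCast {M : Type*} [AddCommMonoid M] (d : ℕ) [NeZero d]
    (f : ZMod d → M) : ∑ u ∈ range d, f u = ∑ x : ZMod d, f x :=
  sum_nbij' (fun u => (u : ZMod d)) ZMod.val (by simp) (fun x _ => mem_range.mpr x.val_lt)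
    (fun u hu => ZMod.val_cast_of_lt (mem_range.mp hu)) (fun x _ => ZMod.natCast_zmod_val x)
    fun _ _ => rfl

namespace Polynomial

theorem exists_eval_zero_eq_intCast (H : ℚ[X])
    (hH : ∀ r : ℕ, 0 < r → ∃ z : ℤ, H.eval (r : ℚ) = z) :
    ∃ z : ℤ, H.eval 0 = z := by
  choose! z hz using hH
  set N := H.natDegree + 1
  have hΔ := congrFun (fwdDiff_iter_degree_add_one_eq_zero H) 0
  rw [fwdDiff_iter_eq_sum_shift, sum_range_succ'] at hΔ
  refine ⟨-(-1) ^ N * ∑ k ∈ range N, (-1) ^ (N - (k + 1)) * N.choose (k + 1) * z (k + 1),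
    ?_⟩
  have hterm : ∀ k ∈ range N, ((-1 : ℤ) ^ (N - (k + 1)) * N.choose (k + 1)) •
      H.eval (0 + (k + 1 : ℕ) • (1 : ℚ)) =
      (((-1) ^ (N - (k + 1)) * N.choose (k + 1) * z (k + 1) : ℤ) : ℚ) := fun k _ => by
    rw [zero_add, nsmul_one, hz _ k.succ_pos, zsmul_eq_mul]
    push_cast; ring
  rw [sum_congr rfl hterm] at hΔ
  simp only [Pi.zero_apply, zero_smul, add_zero, Nat.choose_zero_right, Nat.sub_zero] at hΔ
  rw [zsmul_eq_mul] at hΔ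
  have hsign : ((-1 : ℚ) ^ N) ^ 2 = 1 := by rw [← pow_mul, Even.neg_one_pow ⟨N, by ring⟩]
  push_cast at hΔ ⊢
  linear_combination (-1 : ℚ) ^ N * hΔ - H.eval 0 * hsign

theorem exists_coeff_one_eq_intCast (G : ℚ[X])
    (hG : ∀ r : ℕ, ∃ z : ℤ, G.eval (r : ℚ) = r * z) : ∃ z : ℤ, G.coeff 1 = z := by
  have hG0 : G.coeff 0 = 0 := by
    obtain ⟨z, hz⟩ := hG 0
    rw [coeff_zero_eq_eval_zero, ← Nat.cast_zero, hz, Nat.cast_zero, zero_mul]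
  obtain ⟨z, hz⟩ := exists_eval_zero_eq_intCast G.divX fun r hr => by
    obtain ⟨z, hz⟩ := hG r
    refine ⟨z, mul_left_cancel₀ (Nat.cast_ne_zero.mpr hr.ne') ?_⟩
    simpa [hG0] using (congrArg (eval (r : ℚ)) (X_mul_divX_add G)).trans hz
  exact ⟨z, by rw [← coeff_divX, coeff_zero_eq_eval_zero, hz]⟩

noncomputable def evalBernoulli (P : ℚ[X]) : ℚ :=
  P.sum fun h c => _root_.bernoulli h * c

noncomputable def faulhaber (P : ℚ[X]) : ℚ[X] :=
  P.sum fun h c => C (c / (h + 1)) * (bernoulli (h + 1) - C (_root_.bernoulli (h + 1)))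

theorem eval_faulhaber (P : ℚ[X]) (N : ℕ) :
    (faulhaber P).eval (N : ℚ) = ∑ u ∈ range N, P.eval (u : ℚ) := by
  simp only [faulhaber, Polynomial.sum, eval_finsetSum, eval_mul, eval_C, eval_sub,
    eval_eq_sum (p := P), sum_comm (s := range N), ← mul_sum]
  refine sum_congr rfl fun h _ => ?_
  rw [← sum_range_pow_eq_bernoulli_sub N h]
  field_simp

theorem coeff_one_faulhaber (P : ℚ[X]) : (faulhaber P).coeff 1 = P.evalBernoulli := by
  simp only [faulhaber, evalBernoulli, Polynomial.sum, finsetSum_coeff, coeff_C_mul, coeff_sub,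
    coeff_bernoulli, coeff_C, if_pos (Nat.le_add_left 1 _), one_ne_zero, if_false, sub_zero,
    Nat.add_sub_cancel, Nat.choose_one_right]
  refine sum_congr rfl fun h _ => ?_
  push_cast
  field_simp

section Telescoping

variable {F Q : ℤ[X]} {n : ℕ}

theorem dvd_sum_range_eval_mul_of_coprime (hQ : Q.comp (X + 1) - Q = n • F) {d : ℕ}
    (hd : n.Coprime d) : (d : ℤ) ∣ ∑ u ∈ range d, F.eval (n * u : ℤ) := by
  rcases Nat.eq_zero_or_pos d with rfl | hd0
  · simp
  have : NeZero d := ⟨hd0.ne'⟩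
  rw [← ZMod.intCast_zmod_eq_zero_iff_dvd]
  set φ := Int.castRingHom (ZMod d)
  have hn : IsUnit (n : ZMod d) := (ZMod.isUnit_iff_coprime n d).mpr hd
  have hΔ : ∀ x : ZMod d, (Q.map φ).eval (x + 1) - (Q.map φ).eval x = n * (F.map φ).eval x :=
    fun x => by
      simpa [Polynomial.map_comp, eval_comp, nsmul_eq_mul] using
        congrArg (fun P => (P.map φ).eval x) hQ
  have htele : (n : ZMod d) * ∑ x : ZMod d, (F.map φ).eval x = 0 := by
    simp only [mul_sum, ← hΔ, sum_sub_distrib, sub_eq_zero]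
    exact Fintype.sum_equiv (Equiv.addRight 1) _ _ fun _ => rfl
  have hperm : ∑ x : ZMod d, (F.map φ).eval (n * x) = ∑ x : ZMod d, (F.map φ).eval x :=
    Fintype.sum_equiv (Units.mulLeft hn.unit) _ _ fun _ => rfl
  have hcast : ∀ u : ℕ,
      ((F.eval (n * u : ℤ) : ℤ) : ZMod d) = (F.map φ).eval (n * (u : ZMod d)) :=
    fun u => by simpa using (eval_map_apply (f := φ) (p := F) (n * u : ℤ)).symm
  push_cast [hcast]
  rw [ZMod.sum_range_natCast d fun x => (F.map φ).eval (n * x), hperm]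
  exact hn.mul_right_eq_zero.mp htele

theorem dvd_sum_range_eval_mul (hQ : Q.comp (X + 1) - Q = n • F) (d : ℕ) :
    (d : ℤ) ∣ ∑ u ∈ range d, F.eval (n * u : ℤ) := by
  induction d using Nat.strong_induction_on with
  | _ d ih =>
  by_cases hcop : n.Coprime d
  · exact dvd_sum_range_eval_mul_of_coprime hQ hcop
  rcases Nat.eq_zero_or_pos d with rfl | hd0
  · simp
  obtain ⟨d', hd'⟩ := Nat.gcd_dvd_right n d
  have hd'd : d' < d := by
    have hg : 1 < n.gcd d := lt_of_le_of_ne (Nat.gcd_pos_of_pos_right n hd0) (Ne.symm hcop)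
    rcases Nat.eq_zero_or_pos d' with h0 | hpos
    · omega
    · rw [hd']; exact lt_mul_of_one_lt_left hpos hg
  have hper : Function.Periodic (fun u : ℕ => ((F.eval (n * u : ℤ) : ℤ) : ZMod d)) d' := by
    intro u
    dsimp only
    rw [← sub_eq_zero, ← Int.cast_sub, ZMod.intCast_zmod_eq_zero_iff_dvd]
    refine dvd_trans ?_ (sub_dvd_eval_sub _ _ F)
    have : (d : ℤ) ∣ n * d' := by
      rw [hd', Nat.cast_mul]
      exact mul_dvd_mul_right (Int.natCast_dvd_natCast.mpr (n.gcd_dvd_left d)) _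
    simpa [mul_add] using this
  obtain ⟨c, hc⟩ := ih d' hd'd
  rw [← ZMod.intCast_zmod_eq_zero_iff_dvd]
  calc ((∑ u ∈ range d, F.eval (n * u : ℤ) : ℤ) : ZMod d)
      = ∑ u ∈ range (n.gcd d * d'), ((F.eval (n * u : ℤ) : ℤ) : ZMod d) := by
        rw [← hd', Int.cast_sum]
    _ = n.gcd d * d' * c := by
        rw [hper.sum_range_mul, ← Int.cast_sum, hc, nsmul_eq_mul]
        push_cast; ring
    _ = 0 := by rw [← Nat.cast_mul, ← hd', ZMod.natCast_self, zero_mul]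

theorem exists_evalBernoulli_comp_eq_intCast (hQ : Q.comp (X + 1) - Q = n • F) :
    ∃ z : ℤ, ((F.map (Int.castRingHom ℚ)).comp (C (n : ℚ) * X)).evalBernoulli = z := by
  rw [← coeff_one_faulhaber]
  refine exists_coeff_one_eq_intCast _ fun r => ?_
  obtain ⟨z, hz⟩ := dvd_sum_range_eval_mul hQ r
  refine ⟨z, ?_⟩
  have hcast : ∀ u : ℕ,
      (F.map (Int.castRingHom ℚ)).eval (n * u : ℚ) = ((F.eval (n * u : ℤ) : ℤ) : ℚ) :=
    fun u => by simpa using eval_intCast_map (Int.castRingHom ℚ) F (n * u)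
  simp only [eval_faulhaber, eval_comp, eval_mul, eval_C, eval_X, hcast]
  exact_mod_cast hz

end Telescoping

theorem hasseDeriv_taylor {R : Type*} [CommRing R] [IsDomain R] [Infinite R] (k : ℕ) (r : R)
    (f : R[X]) :
    hasseDeriv k (taylor r f) = taylor r (hasseDeriv k f) :=
  funext fun s => by rw [← taylor_coeff, taylor_taylor, taylor_coeff, taylor_eval]

theorem coeff_ascPochhammer_s11 {R : Type*} [CommSemiring R] (n m : ℕ) :
    (ascPochhammer R n).coeff m = stirling1 n m := by
  induction n generalizing m with
  | zero => rcases m with _ | m <;> simp [stirling1, coeff_one]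
  | succ n ih =>
    rw [ascPochhammer_succ_right, mul_add, coeff_add, ← C_eq_natCast, coeff_mul_C]
    rcases m with _ | m
    · rcases n with _ | n <;> simp [ih, stirling1]
    · rw [coeff_mul_X, ih, ih, stirling1]
      push_cast; ring

theorem hasseDeriv_ascPochhammer_comp_sub (ν j : ℕ) :
    (hasseDeriv j (ascPochhammer ℤ (ν + 1))).comp (X + 1) -
        hasseDeriv j (ascPochhammer ℤ (ν + 1)) =
      (ν + 1) • hasseDeriv j ((ascPochhammer ℤ ν).comp (X + 1)) := by
  have htaylor : ∀ f : ℤ[X], f.comp (X + 1) = taylor 1 f := fun f => by rw [taylor_apply, C_1]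
  rw [htaylor, ← hasseDeriv_taylor, ← htaylor, ascPochhammer_succ_comp_X_add_one, map_add,
    map_nsmul, add_sub_cancel_left]

theorem coeff_hasseDeriv_ascPochhammer_comp (ν j h : ℕ) :
    (hasseDeriv j ((ascPochhammer ℤ ν).comp (X + 1))).coeff h
      = (h + j).choose j * stirling1 (ν + 1) (h + j + 1) := by
  rw [hasseDeriv_coeff, ← coeff_ascPochhammer_s11, ascPochhammer_succ_left, coeff_X_mul]

end Polynomial

theorem intChoose_natCast_s11 (a b : ℕ) : intChoose a b = a.choose b := by
  rw [intChoose, Nat.cast_choose_eq_descPochhammer_div, descPochhammer_eval_eq_prod_range]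
  push_cast; rfl

theorem stirling1_eq_zero_of_lt {n m : ℕ} (h : n < m) : stirling1 n m = 0 := by
  rw [← Nat.cast_id (stirling1 n m), ← coeff_ascPochhammer_s11]
  exact coeff_eq_zero_of_natDegree_lt (by rwa [ascPochhammer_natDegree])

theorem bsA_zero_left (k : ℕ) : bsA 0 k = stirling1 0 k := by
  simp [bsA, intChoose]

theorem bsA_zero_right (n : ℕ) : bsA n 0 = stirling1 n 0 := by
  rw [bsA, sum_range_succ', sum_eq_zero fun h _ => ?_]
  · simp [intChoose]
  · have htop : ((0 : ℕ) : ℤ) + (h + 1 : ℕ) - 1 = (h : ℕ) := by push_cast; ring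
    rw [htop, intChoose_natCast_s11, Nat.choose_succ_self]
    simp

theorem bsA_succ_succ_s11 (ν j : ℕ) :
    bsA (ν + 1) (j + 1) = (((hasseDeriv j ((ascPochhammer ℤ ν).comp (X + 1))).map
      (Int.castRingHom ℚ)).comp (C ((ν + 1 : ℕ) : ℚ) * X)).evalBernoulli := by
  set P := ((hasseDeriv j ((ascPochhammer ℤ ν).comp (X + 1))).map
      (Int.castRingHom ℚ)).comp (C ((ν + 1 : ℕ) : ℚ) * X)
  have hcoeff : ∀ h,
      P.coeff h = (h + j).choose j * stirling1 (ν + 1) (h + j + 1) * (ν + 1 : ℚ) ^ h :=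
    fun h => by
      simp only [P, comp_C_mul_X_coeff, coeff_map, coeff_hasseDeriv_ascPochhammer_comp, eq_intCast]
      push_cast; ring
  have hdeg : P.natDegree < ν + 2 := by
    refine Nat.lt_succ_of_le (natDegree_le_iff_coeff_eq_zero.mpr fun h hh => ?_)
    rw [hcoeff, stirling1_eq_zero_of_lt (by omega), Nat.cast_zero, mul_zero, zero_mul]
  rw [evalBernoulli, sum_over_range' P (fun _ => mul_zero _) _ hdeg, bsA]
  refine sum_congr rfl fun h _ => ?_
  have htop : ((j + 1 : ℕ) : ℤ) + h - 1 = (h + j : ℕ) := by push_cast; ring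
  rw [htop, intChoose_natCast_s11, Nat.choose_symm_add, hcoeff, show h + (j + 1) = h + j + 1 by ring]
  push_cast; ring

theorem bsA_isInt (n k : ℕ) : ∃ z : ℤ, bsA n k = (z : ℚ) := by
  rcases n with _ | ν
  · exact ⟨stirling1 0 k, mod_cast bsA_zero_left k⟩
  rcases k with _ | j
  · exact ⟨stirling1 (ν + 1) 0, mod_cast bsA_zero_right (ν + 1)⟩
  rw [bsA_succ_succ_s11]
  exact exists_evalBernoulli_comp_eq_intCast (hasseDeriv_ascPochhammer_comp_sub ν j)
end

section
/- Fix a nonnegative integer k and suppose P is a polynomial with rational coefficients such that P(m) = A_{m,m-k} for every integer m ≥ k. Then for every positive integer m one has P(-m) = B_{m+k,m}, the Bernoulli–Stirling number of the second kind. -/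
/-- Stirling numbers of the second kind (partition Stirling numbers). -/
def stirling2 : ℕ → ℕ → ℕ
  | 0, 0 => 1
  | 0, _ + 1 => 0
  | _ + 1, 0 => 0
  | n + 1, k + 1 => (k + 1) * stirling2 n (k + 1) + stirling2 n k

/-- Bernoulli–Stirling numbers of the second kind. -/
def bsB (n k : ℕ) : ℚ :=
  ∑ h ∈ Finset.range (n + 1),
    bernoulli h * (n.choose h) * stirling2 (n - h) k * (k : ℚ) ^ h

/- ### Auxiliary development -/

/-- Second-order Eulerian numbers. -/
def E2 : ℕ → ℕ → ℕ
  | 0, 0 => 1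
  | 0, _ + 1 => 0
  | k + 1, 0 => E2 k 0
  | k + 1, j + 1 => (j + 2) * E2 k (j + 1) + (2 * k - j) * E2 k j

lemma E2_eq_zero : ∀ k j, k < j → E2 k j = 0
  | 0, _ + 1, _ => rfl
  | k + 1, j + 1, h => by
      show (j + 2) * E2 k (j + 1) + (2 * k - j) * E2 k j = 0
      rw [E2_eq_zero k (j + 1) (by omega), E2_eq_zero k j (by omega)]
      ring

/-- rational "choose": `qch x r = x(x-1)⋯(x-r+1)/r!` -/
def qch (x : ℚ) (r : ℕ) : ℚ := (∏ i ∈ Finset.range r, (x - i)) / r.factorial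

lemma qch_zero (x : ℚ) : qch x 0 = 1 := by simp [qch]

lemma factorial_cast_ne (r : ℕ) : ((r.factorial : ℚ)) ≠ 0 := by
  exact_mod_cast (Nat.factorial_pos r).ne'

lemma qch_succ (x : ℚ) (r : ℕ) : qch x (r + 1) = qch x r * (x - r) / (r + 1) := by
  unfold qch
  rw [Finset.prod_range_succ, Nat.factorial_succ]
  push_cast
  rw [div_mul_eq_mul_div, div_div]
  congr 1 <;> ring

lemma qch_shift (x : ℚ) (r : ℕ) : qch (x + 1) (r + 1) = qch x r * (x + 1) / (r + 1) := by
  unfold qch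
  rw [Finset.prod_range_succ', Nat.factorial_succ]
  have h4 : (∏ i ∈ Finset.range r, (x + 1 - ((i + 1 : ℕ) : ℚ))) =
      ∏ i ∈ Finset.range r, (x - i) := by
    apply Finset.prod_congr rfl; intro i _; push_cast; ring
  rw [h4]
  push_cast
  rw [div_mul_eq_mul_div, div_div]
  congr 1 <;> ring

lemma qch_pascal (x : ℚ) (r : ℕ) : qch (x + 1) (r + 1) = qch x (r + 1) + qch x r := by
  rw [qch_shift, qch_succ]
  have h2 : ((r : ℚ) + 1) ≠ 0 := by positivity
  field_simp
  ring

lemma qch_bracket (x : ℚ) (r j : ℕ) :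
    ((j : ℚ) + 1) * qch x (r + 1) + ((r : ℚ) - j) * qch (x + 1) (r + 1)
      = (x - j) * qch x r := by
  rw [qch_shift, qch_succ]
  have h2 : ((r : ℚ) + 1) ≠ 0 := by positivity
  field_simp
  ring

lemma qch_nat_zero (N r : ℕ) (h : N < r) : qch (N : ℚ) r = 0 := by
  unfold qch
  rw [Finset.prod_eq_zero (Finset.mem_range.mpr h) (by simp)]
  simp

lemma qch_nat_choose : ∀ (h N : ℕ), h ≤ N → qch (N : ℚ) h = N.choose h
  | 0, N, _ => by simp [qch_zero]
  | h + 1, N, hle => by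
      have ih := qch_nat_choose h N (by omega)
      have hle' : h ≤ N := by omega
      rw [qch_succ, ih]
      have h1 := Nat.choose_succ_right_eq N h
      have h1' := congrArg (fun t : ℕ => (t : ℚ)) h1
      push_cast [Nat.cast_sub hle'] at h1'
      have h2 : ((h : ℚ) + 1) ≠ 0 := by positivity
      rw [div_eq_iff h2]
      linarith [h1']

lemma qch_neg : ∀ (r : ℕ) (x : ℚ), qch (-x) r = (-1) ^ r * qch (x + r - 1) r
  | 0, x => by simp [qch_zero]
  | r + 1, x => by
      have ih := qch_neg r x
      rw [qch_succ, ih]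
      have h1 : x + (r + 1 : ℕ) - 1 = (x + r - 1) + 1 := by push_cast; ring
      rw [h1, qch_shift]
      have h2 : ((r : ℚ) + 1) ≠ 0 := by positivity
      field_simp
      ring

/-- The diagonal Stirling polynomial (as a function), via second-order Eulerian numbers. -/
def cfun (k : ℕ) (x : ℚ) : ℚ := ∑ j ∈ Finset.range (k + 1), (E2 k j : ℚ) * qch (x + j) (2 * k)

lemma cfun_zero (x : ℚ) : cfun 0 x = 1 := by
  simp [cfun, qch_zero, E2]

lemma cfun_delta (k : ℕ) (x : ℚ) : cfun (k + 1) (x + 1) = cfun (k + 1) x + x * cfun k x := by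
  have key : cfun (k + 1) (x + 1) - cfun (k + 1) x
      = ∑ j ∈ Finset.range (k + 2), (E2 (k + 1) j : ℚ) * qch (x + j) (2 * k + 1) := by
    unfold cfun
    rw [← Finset.sum_sub_distrib]
    apply Finset.sum_congr rfl
    intro j _
    rw [← mul_sub]
    congr 1
    have h1 : x + 1 + (j : ℚ) = (x + j) + 1 := by ring
    have h2 : 2 * (k + 1) = (2 * k + 1) + 1 := by ring
    rw [h1, h2, qch_pascal]
    ring
  have step : ∑ j ∈ Finset.range (k + 2), (E2 (k + 1) j : ℚ) * qch (x + j) (2 * k + 1)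
      = x * cfun k x := by
    rw [Finset.sum_range_succ' _ (k + 1)]
    have expand : ∑ j ∈ Finset.range (k + 1), (E2 (k + 1) (j + 1) : ℚ) * qch (x + ((j + 1 : ℕ) : ℚ)) (2 * k + 1)
        = ∑ j ∈ Finset.range (k + 1), (((j : ℚ) + 1 + 1) * (E2 k (j + 1) : ℚ) * qch (x + (j : ℚ) + 1) (2 * k + 1)
            + ((2 * (k : ℚ) - j) * (E2 k j : ℚ)) * qch (x + (j : ℚ) + 1) (2 * k + 1)) := by
      apply Finset.sum_congr rfl
      intro j hj
      have hj' : j ≤ k := by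
        have := Finset.mem_range.mp hj; omega
      have hdef : E2 (k + 1) (j + 1) = (j + 2) * E2 k (j + 1) + (2 * k - j) * E2 k j := rfl
      have hc : ((2 * k - j : ℕ) : ℚ) = 2 * (k : ℚ) - j := by
        push_cast [Nat.cast_sub (show j ≤ 2 * k by omega)]; ring
      have hx : x + ((j + 1 : ℕ) : ℚ) = x + (j : ℚ) + 1 := by push_cast; ring
      rw [hdef, hx]
      push_cast [hc]
      ring
    rw [expand, Finset.sum_add_distrib]
    have sh : ∑ j ∈ Finset.range (k + 1), ((j : ℚ) + 1 + 1) * (E2 k (j + 1) : ℚ) * qch (x + (j : ℚ) + 1) (2 * k + 1)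
          + (E2 (k + 1) 0 : ℚ) * qch (x + ((0 : ℕ) : ℚ)) (2 * k + 1)
        = ∑ j ∈ Finset.range (k + 2), ((j : ℚ) + 1) * (E2 k j : ℚ) * qch (x + j) (2 * k + 1) := by
      rw [Finset.sum_range_succ' _ (k + 1)]
      congr 1
      · apply Finset.sum_congr rfl
        intro j _
        have hx : x + ((j + 1 : ℕ) : ℚ) = x + (j : ℚ) + 1 := by push_cast; ring
        rw [hx]
        push_cast
        ring
      · have he : E2 (k + 1) 0 = E2 k 0 := rfl
        rw [he]
        push_cast
        ring
    have drop : ∑ j ∈ Finset.range (k + 2), ((j : ℚ) + 1) * (E2 k j : ℚ) * qch (x + j) (2 * k + 1)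
        = ∑ j ∈ Finset.range (k + 1), ((j : ℚ) + 1) * (E2 k j : ℚ) * qch (x + j) (2 * k + 1) := by
      rw [Finset.sum_range_succ, E2_eq_zero k (k + 1) (by omega)]
      simp
    calc ∑ j ∈ Finset.range (k + 1), ((j : ℚ) + 1 + 1) * (E2 k (j + 1) : ℚ) * qch (x + (j : ℚ) + 1) (2 * k + 1)
          + ∑ j ∈ Finset.range (k + 1), ((2 * (k : ℚ) - j) * (E2 k j : ℚ)) * qch (x + (j : ℚ) + 1) (2 * k + 1)
          + (E2 (k + 1) 0 : ℚ) * qch (x + ((0 : ℕ) : ℚ)) (2 * k + 1)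
        = (∑ j ∈ Finset.range (k + 1), ((j : ℚ) + 1 + 1) * (E2 k (j + 1) : ℚ) * qch (x + (j : ℚ) + 1) (2 * k + 1)
            + (E2 (k + 1) 0 : ℚ) * qch (x + ((0 : ℕ) : ℚ)) (2 * k + 1))
          + ∑ j ∈ Finset.range (k + 1), ((2 * (k : ℚ) - j) * (E2 k j : ℚ)) * qch (x + (j : ℚ) + 1) (2 * k + 1) := by
          ring
      _ = ∑ j ∈ Finset.range (k + 1), ((j : ℚ) + 1) * (E2 k j : ℚ) * qch (x + j) (2 * k + 1)
          + ∑ j ∈ Finset.range (k + 1), ((2 * (k : ℚ) - j) * (E2 k j : ℚ)) * qch (x + (j : ℚ) + 1) (2 * k + 1) := by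
          rw [sh, drop]
      _ = ∑ j ∈ Finset.range (k + 1), (E2 k j : ℚ) *
            (((j : ℚ) + 1) * qch (x + j) (2 * k + 1) + ((2 * (k : ℚ)) - j) * qch ((x + j) + 1) (2 * k + 1)) := by
          rw [← Finset.sum_add_distrib]
          apply Finset.sum_congr rfl
          intro j _
          ring
      _ = ∑ j ∈ Finset.range (k + 1), (E2 k j : ℚ) * ((x : ℚ) * qch (x + j) (2 * k)) := by
          apply Finset.sum_congr rfl
          intro j _
          congr 1
          have hb := qch_bracket (x + j) (2 * k) j
          have hsub : (x + (j : ℚ)) - j = x := by ring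
          rw [hsub] at hb
          push_cast at hb ⊢
          linarith [hb]
      _ = x * cfun k x := by
          rw [cfun, Finset.mul_sum]
          apply Finset.sum_congr rfl
          intro j _
          ring
  linarith [key, step]

lemma stirling1_self : ∀ n, stirling1 n n = 1
  | 0 => rfl
  | n + 1 => by
      show n * stirling1 n (n + 1) + stirling1 n n = 1
      rw [stirling1_self n]
      have : stirling1 n (n + 1) = 0 := stirling1_eq_zero n (n + 1) (by omega)
      rw [this]; ring
where
  stirling1_eq_zero : ∀ n m, n < m → stirling1 n m = 0
  | 0, _ + 1, _ => rfl
  | n + 1, m + 1, h => by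
      show n * stirling1 n (m + 1) + stirling1 n m = 0
      rw [stirling1_eq_zero n (m + 1) (by omega), stirling1_eq_zero n m (by omega)]
      ring

lemma stirling1_eq_zero : ∀ n m, n < m → stirling1 n m = 0
  | 0, _ + 1, _ => rfl
  | n + 1, m + 1, h => by
      show n * stirling1 n (m + 1) + stirling1 n m = 0
      rw [stirling1_eq_zero n (m + 1) (by omega), stirling1_eq_zero n m (by omega)]
      ring

lemma stirling2_eq_zero : ∀ n m, n < m → stirling2 n m = 0
  | 0, _ + 1, _ => rfl
  | n + 1, m + 1, h => by
      show (m + 1) * stirling2 n (m + 1) + stirling2 n m = 0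
      rw [stirling2_eq_zero n (m + 1) (by omega), stirling2_eq_zero n m (by omega)]
      ring

lemma stirling2_self : ∀ n, stirling2 n n = 1
  | 0 => rfl
  | n + 1 => by
      show (n + 1) * stirling2 n (n + 1) + stirling2 n n = 1
      rw [stirling2_self n, stirling2_eq_zero n (n + 1) (by omega)]
      ring

lemma cfun_nat_zero (k n : ℕ) (h : n < k) : cfun k (n : ℚ) = 0 := by
  unfold cfun
  apply Finset.sum_eq_zero
  intro j hj
  have hj' : j ≤ k := by
    have := Finset.mem_range.mp hj; omega
  have hc : (n : ℚ) + j = ((n + j : ℕ) : ℚ) := by push_cast; ring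
  rw [hc, qch_nat_zero (n + j) (2 * k) (by omega)]
  ring

lemma cfun_stirling1 : ∀ n k : ℕ, k ≤ n → cfun k (n : ℚ) = stirling1 n (n - k)
  | 0, 0, _ => by simp [cfun_zero, stirling1]
  | n + 1, 0, _ => by
      rw [cfun_zero, Nat.sub_zero, stirling1_self]
      norm_num
  | n + 1, K + 1, h => by
      have hcast : ((n + 1 : ℕ) : ℚ) = (n : ℚ) + 1 := by push_cast; ring
      rw [hcast, cfun_delta]
      have ihK : cfun K (n : ℚ) = stirling1 n (n - K) := cfun_stirling1 n K (by omega)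
      rcases Nat.lt_or_ge K n with hlt | hge
      · -- K + 1 ≤ n
        have ih1 : cfun (K + 1) (n : ℚ) = stirling1 n (n - (K + 1)) :=
          cfun_stirling1 n (K + 1) (by omega)
        rw [ih1, ihK]
        have hidx : n + 1 - (K + 1) = (n - (K + 1)) + 1 := by omega
        rw [hidx]
        show _ = ((n * stirling1 n ((n - (K + 1)) + 1) + stirling1 n (n - (K + 1)) : ℕ) : ℚ)
        have hidx2 : (n - (K + 1)) + 1 = n - K := by omega
        rw [hidx2]
        push_cast
        ring
      · -- K = n
        have hKn : K = n := by omega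
        subst hKn
        rw [cfun_nat_zero (K + 1) K (by omega)]
        have h1 : K + 1 - (K + 1) = 0 := by omega
        rw [h1]
        have h2 : stirling1 (K + 1) 0 = 0 := by
          cases K <;> rfl
        rw [h2, ihK]
        have h3 : K - K = 0 := by omega
        rw [h3]
        cases K with
        | zero => norm_num
        | succ K' =>
            have : stirling1 (K' + 1) 0 = 0 := by rfl
            rw [this]
            norm_num

lemma cfun_stirling2 : ∀ k m : ℕ, cfun k (-(m : ℚ)) = stirling2 (m + k) m
  | 0, m => by
      rw [cfun_zero, Nat.add_zero, stirling2_self]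
      norm_num
  | K + 1, 0 => by
      have : -((0 : ℕ) : ℚ) = ((0 : ℕ) : ℚ) := by norm_num
      rw [this, cfun_nat_zero (K + 1) 0 (by omega)]
      have : stirling2 (0 + (K + 1)) 0 = 0 := by
        show stirling2 (K + 1) 0 = 0
        rfl
      rw [this]
      norm_num
  | K + 1, m + 1 => by
      have hdelta := cfun_delta K (-(((m : ℚ)) + 1))
      have h1 : -((m : ℚ) + 1) + 1 = -(m : ℚ) := by ring
      rw [h1] at hdelta
      have hm1 : -(((m + 1 : ℕ)) : ℚ) = -((m : ℚ) + 1) := by push_cast; ring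
      have ih1 : cfun (K + 1) (-(m : ℚ)) = stirling2 (m + (K + 1)) m := cfun_stirling2 (K + 1) m
      have ih2 : cfun K (-((m : ℚ) + 1)) = stirling2 ((m + 1) + K) (m + 1) := by
        have := cfun_stirling2 K (m + 1)
        rw [hm1] at this
        exact this
      rw [hm1]
      have : cfun (K + 1) (-((m : ℚ) + 1))
          = cfun (K + 1) (-(m : ℚ)) + ((m : ℚ) + 1) * cfun K (-((m : ℚ) + 1)) := by
        linarith [hdelta]
      rw [this, ih1, ih2]
      have hidx : (m + 1) + (K + 1) = (m + K + 1) + 1 := by omega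
      rw [hidx]
      show _ = (((m + 1) * stirling2 (m + K + 1) (m + 1) + stirling2 (m + K + 1) m : ℕ) : ℚ)
      have e1 : m + (K + 1) = m + K + 1 := by omega
      have e2 : m + 1 + K = m + K + 1 := by omega
      rw [e1, e2]
      push_cast
      ring

/-- Polynomial whose evaluation at `x` is `qch (x + a) r`. -/
noncomputable def qpolyP (a : ℚ) (r : ℕ) : Polynomial ℚ :=
  (∏ i ∈ Finset.range r, (Polynomial.X + Polynomial.C (a - i))) * Polynomial.C ((r.factorial : ℚ)⁻¹)

lemma qpolyP_eval (a : ℚ) (r : ℕ) (x : ℚ) : (qpolyP a r).eval x = qch (x + a) r := by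
  simp only [qpolyP, Polynomial.eval_mul, Polynomial.eval_prod, Polynomial.eval_add,
    Polynomial.eval_X, Polynomial.eval_C, qch, div_eq_mul_inv]
  congr 1
  apply Finset.prod_congr rfl
  intro i _
  ring

/-- The master polynomial. -/
noncomputable def QP (k : ℕ) : Polynomial ℚ :=
  ∑ h ∈ Finset.range (k + 1),
    Polynomial.C ((bernoulli h : ℚ)) * qpolyP ((h : ℚ) - 1 - k) h *
      (∑ j ∈ Finset.range (k - h + 1),
        Polynomial.C ((E2 (k - h) j : ℚ)) * qpolyP (j : ℚ) (2 * (k - h))) *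
      Polynomial.X ^ h

lemma QP_eval (k : ℕ) (x : ℚ) :
    (QP k).eval x = ∑ h ∈ Finset.range (k + 1),
      (bernoulli h : ℚ) * qch (x + ((h : ℚ) - 1 - k)) h * cfun (k - h) x * x ^ h := by
  unfold QP cfun
  rw [Polynomial.eval_finset_sum]
  apply Finset.sum_congr rfl
  intro h _
  simp only [Polynomial.eval_mul, Polynomial.eval_pow, Polynomial.eval_X, Polynomial.eval_C,
    Polynomial.eval_finset_sum, qpolyP_eval]

lemma QP_eval_nat (k m : ℕ) (hk : k ≤ m) : (QP k).eval (m : ℚ) = bsA m (m - k) := by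
  have hbsA : bsA m (m - k) = ∑ h ∈ Finset.range (k + 1),
      bernoulli h * intChoose (((m - k : ℕ) : ℤ) + h - 1) h * stirling1 m (h + (m - k)) * (m : ℚ) ^ h := by
    unfold bsA
    rw [← Finset.sum_subset (Finset.range_subset_range.mpr (by omega : k + 1 ≤ m + 1))]
    intro h hmem hnot
    have hh : k < h := by
      have := Finset.mem_range.mp hmem
      simp only [Finset.mem_range] at hnot
      omega
    have hz : stirling1 m (h + (m - k)) = 0 := by
      apply stirling1_eq_zero
      omega
    rw [hz]
    push_cast
    ring
  rw [QP_eval, hbsA]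
  apply Finset.sum_congr rfl
  intro h hh
  have hh' : h ≤ k := by
    have := Finset.mem_range.mp hh; omega
  have e1 : intChoose (((m - k : ℕ) : ℤ) + h - 1) h = qch ((m : ℚ) + ((h : ℚ) - 1 - k)) h := by
    unfold intChoose qch
    congr 1
    apply Finset.prod_congr rfl
    intro i _
    have hc : (((m - k : ℕ) : ℤ) : ℚ) = (m : ℚ) - k := by
      push_cast [Nat.cast_sub hk]; ring
    push_cast [hc]
    ring
  have e2 : stirling1 m (h + (m - k)) = stirling1 m (m - (k - h)) := by
    congr 1
    omega
  have e3 : cfun (k - h) (m : ℚ) = stirling1 m (m - (k - h)) :=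
    cfun_stirling1 m (k - h) (by omega)
  rw [e1, e2, ← e3]

lemma QP_eval_neg (k m : ℕ) (hm : 0 < m) : (QP k).eval (-(m : ℚ)) = bsB (m + k) m := by
  have hbsB : bsB (m + k) m = ∑ h ∈ Finset.range (k + 1),
      bernoulli h * ((m + k).choose h) * stirling2 (m + k - h) m * (m : ℚ) ^ h := by
    unfold bsB
    rw [← Finset.sum_subset (Finset.range_subset_range.mpr (by omega : k + 1 ≤ m + k + 1))]
    intro h hmem hnot
    have hh : k < h ∧ h ≤ m + k := by
      have := Finset.mem_range.mp hmem
      simp only [Finset.mem_range] at hnot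
      omega
    have hz : stirling2 (m + k - h) m = 0 := by
      apply stirling2_eq_zero
      omega
    rw [hz]
    push_cast
    ring
  rw [QP_eval, hbsB]
  apply Finset.sum_congr rfl
  intro h hh
  have hh' : h ≤ k := by
    have := Finset.mem_range.mp hh; omega
  have e1 : qch (-(m : ℚ) + ((h : ℚ) - 1 - k)) h = (-1 : ℚ) ^ h * qch ((m + k : ℕ) : ℚ) h := by
    have harg : -(m : ℚ) + ((h : ℚ) - 1 - k) = -((m : ℚ) + (k : ℚ) + 1 - h) := by ring
    rw [harg, qch_neg]
    congr 2
    push_cast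
    ring
  have e2 : qch (((m + k : ℕ)) : ℚ) h = ((m + k).choose h : ℚ) :=
    qch_nat_choose h (m + k) (by omega)
  have e3 : cfun (k - h) (-(m : ℚ)) = stirling2 (m + (k - h)) m := cfun_stirling2 (k - h) m
  have e4 : stirling2 (m + k - h) m = stirling2 (m + (k - h)) m := by
    congr 1
    omega
  have e5 : (-(m : ℚ)) ^ h = (-1 : ℚ) ^ h * (m : ℚ) ^ h := neg_pow _ _
  have e6 : ((-1 : ℚ) ^ h) * ((-1 : ℚ) ^ h) = 1 := by
    rw [← mul_pow]
    norm_num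
  rw [e1, e2, e3, e4, e5]
  linear_combination (bernoulli h * (((m + k).choose h : ℕ) : ℚ) *
    ((stirling2 (m + (k - h)) m : ℕ) : ℚ) * (m : ℚ) ^ h) * e6

theorem bsA_polynomial_neg_eval (k : ℕ) (P : Polynomial ℚ)
    (hP : ∀ m : ℕ, k ≤ m → P.eval (m : ℚ) = bsA m (m - k)) :
    ∀ m : ℕ, 0 < m → P.eval (-(m : ℚ)) = bsB (m + k) m := by
  have hPQ : P = QP k := by
    apply Polynomial.eq_of_infinite_eval_eq
    apply Set.infinite_of_injective_forall_mem
      (f := fun n : ℕ => ((n + k : ℕ) : ℚ))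
    · intro a b hab
      have : ((a + k : ℕ) : ℚ) = ((b + k : ℕ) : ℚ) := hab
      have h2 : a + k = b + k := Nat.cast_injective this
      omega
    · intro n
      show P.eval ((n + k : ℕ) : ℚ) = (QP k).eval ((n + k : ℕ) : ℚ)
      rw [hP (n + k) (by omega), QP_eval_nat k (n + k) (by omega)]
  intro m hm
  rw [hPQ, QP_eval_neg k m hm]
end

section
/- For all nonnegative integers n and x with x ≥ n, one has B_{x,x-n} = Σ_{u=0}^{n} C(n+x, n-u) · C(n-x, n+u) · A_{n+u,u}, where C(a, b) for an integer a (possibly negative) and a nonnegative integer b denotes the generalized binomial coefficient a(a-1)⋯(a-b+1)/b!. -/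
/-!
For fixed `n`, the numbers `B_{y, y-n}` (`y ≥ n`) are the values of a polynomial of degree `2n`
in `y` (`bsPoly n`). Indeed, the recurrence of the Stirling numbers of the second kind, read as a
difference equation in `m`, extends `m ↦ {m, m-j}` by repeated discrete antidifferentiation to a
polynomial of degree `2j` on `ℤ`, whose value at `-k` is `[j+k, k]`. Hence `bsPoly n` equals
`A_{n+u,u}` at `y = -u` and vanishes at `y = 1, …, n`. With `x` replaced by `y`, the right-hand side
is a polynomial of degree `2n` with the same values at the `2n+1` nodes `-n, …, n`, because
`C(n+y, n-u) C(n-y, n+u)` is `1` at `y = -u` and `0` at every other node.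
-/

open Finset fwdDiff

namespace BernoulliStirling

theorem stirling1_eq_stirlingFirst : ∀ n k, stirling1 n k = Nat.stirlingFirst n k
  | 0, 0 | 0, _ + 1 | _ + 1, 0 => rfl
  | n + 1, k + 1 => by
    rw [stirling1, Nat.stirlingFirst_succ_succ, stirling1_eq_stirlingFirst n,
      stirling1_eq_stirlingFirst n]

theorem stirling2_eq_stirlingSecond : ∀ n k, stirling2 n k = Nat.stirlingSecond n k
  | 0, 0 | 0, _ + 1 | _ + 1, 0 => rfl
  | n + 1, k + 1 => by
    rw [stirling2, Nat.stirlingSecond_succ_succ, stirling2_eq_stirlingSecond n,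
      stirling2_eq_stirlingSecond n]

theorem intChoose_eq_eval_descPochhammer (a : ℤ) (b : ℕ) :
    intChoose a b = (descPochhammer ℚ b).eval (a : ℚ) / b.factorial := by
  rw [intChoose, descPochhammer_eval_eq_prod_range]

theorem intChoose_natCast (m b : ℕ) : intChoose m b = m.choose b := by
  rw [intChoose_eq_eval_descPochhammer, Nat.cast_choose_eq_descPochhammer_div, Int.cast_natCast]

theorem intChoose_neg (a : ℤ) (b : ℕ) : intChoose (-a) b = (-1) ^ b * intChoose (a + b - 1) b := by
  rw [intChoose_eq_eval_descPochhammer, intChoose_eq_eval_descPochhammer,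
    descPochhammer_eval_eq_ascPochhammer, show ((-a : ℤ) : ℚ) - b + 1 = -((a + b - 1 : ℤ) : ℚ) by
      push_cast; ring, ascPochhammer_eval_neg_eq_descPochhammer, mul_div_assoc]

section DiscreteCalculus

variable {M : Type*} [AddCommGroup M]

noncomputable def antidiff (g : ℤ → M) (x : ℤ) : M := ∑ i ∈ Ico 0 x, g i - ∑ i ∈ Ico x 0, g i

@[simp]
theorem antidiff_zero (g : ℤ → M) : antidiff g 0 = 0 := by simp [antidiff]

theorem fwdDiff_antidiff (g : ℤ → M) : Δ_[1] (antidiff g) = g := by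
  ext x
  rcases le_or_gt 0 x with hx | hx
  · rw [fwdDiff, antidiff, antidiff, Ico_add_one_right_eq_Icc, ← Ico_insert_right hx,
      sum_insert (by simp), Ico_eq_empty_of_le (by omega : 0 ≤ x + 1),
      Ico_eq_empty_of_le hx]
    abel
  · rw [fwdDiff, antidiff, antidiff, ← insert_Ico_add_one_left_eq_Ico hx, sum_insert (by simp),
      Ico_eq_empty_of_le (by omega : x + 1 ≤ 0), Ico_eq_empty_of_le hx.le]
    abel

theorem eq_of_fwdDiff_eq {f g : ℤ → M} (h0 : f 0 = g 0) (h : Δ_[1] f = Δ_[1] g) : f = g := by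
  ext x
  induction x using Int.induction_on with
  | zero => exact h0
  | succ k ih => simpa [fwdDiff, ih] using congrFun h k
  | pred k ih => simpa [fwdDiff, ih] using congrFun h (-k - 1)

end DiscreteCalculus

section PolynomialFunctions

open Polynomial

noncomputable def polyFun (d : ℕ) : Submodule ℚ (ℤ → ℚ) :=
  (degreeLE ℚ d).map (LinearMap.pi fun x : ℤ => leval (x : ℚ))

theorem mem_polyFun {d : ℕ} {f : ℤ → ℚ} :
    f ∈ polyFun d ↔ ∃ p : ℚ[X], p.natDegree ≤ d ∧ ∀ x : ℤ, f x = p.eval (x : ℚ) := by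
  simp only [polyFun, Submodule.mem_map, mem_degreeLE, ← natDegree_le_iff_degree_le, funext_iff,
    LinearMap.pi_apply, leval_apply, eq_comm]

theorem polyFun_mono {d e : ℕ} (h : d ≤ e) : polyFun d ≤ polyFun e :=
  Submodule.map_mono (degreeLE_mono (by exact_mod_cast h))

theorem const_mem_polyFun (c : ℚ) : (fun _ => c) ∈ polyFun 0 :=
  mem_polyFun.2 ⟨C c, by simp, by simp⟩

theorem sub_const_pow_mem_polyFun (c : ℚ) (k : ℕ) : (fun x : ℤ => ((x : ℚ) - c) ^ k) ∈ polyFun k :=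
  mem_polyFun.2 ⟨(X - C c) ^ k, by simp, by simp⟩

theorem intChoose_mem_polyFun (b : ℕ) : (fun x => intChoose x b) ∈ polyFun b :=
  mem_polyFun.2 ⟨C (b.factorial : ℚ)⁻¹ * descPochhammer ℚ b,
    (natDegree_C_mul_le _ _).trans (descPochhammer_natDegree ℚ b).le,
    fun x => by rw [intChoose_eq_eval_descPochhammer, eval_C_mul, div_eq_inv_mul]⟩

theorem mul_mem_polyFun {a b : ℕ} {f g : ℤ → ℚ} (hf : f ∈ polyFun a) (hg : g ∈ polyFun b) :
    (fun x => f x * g x) ∈ polyFun (a + b) := by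
  obtain ⟨p, hp, hpf⟩ := mem_polyFun.1 hf
  obtain ⟨q, hq, hqg⟩ := mem_polyFun.1 hg
  exact mem_polyFun.2 ⟨p * q, natDegree_mul_le.trans (by omega), fun x => by simp [hpf, hqg]⟩

theorem comp_affine_mem_polyFun {d : ℕ} {f : ℤ → ℚ} (hf : f ∈ polyFun d) (a b : ℤ) :
    (fun x => f (a + b * x)) ∈ polyFun d := by
  obtain ⟨p, hp, hpf⟩ := mem_polyFun.1 hf
  refine mem_polyFun.2 ⟨p.comp (C (b : ℚ) * X + C (a : ℚ)), ?_, fun x => by simp [hpf, add_comm]⟩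
  calc (p.comp (C (b : ℚ) * X + C (a : ℚ))).natDegree ≤ d * 1 :=
        natDegree_comp_le.trans (Nat.mul_le_mul hp natDegree_linear_le)
    _ = d := mul_one d

theorem eq_zero_of_mem_polyFun {d : ℕ} {f : ℤ → ℚ} (hf : f ∈ polyFun d) (s : Finset ℤ)
    (hs : d < s.card) (hzero : ∀ x ∈ s, f x = 0) : f = 0 := by
  obtain ⟨p, hp, hpf⟩ := mem_polyFun.1 hf
  have hp0 : p = 0 := by
    refine eq_zero_of_natDegree_lt_card_of_eval_eq_zero' p (s.image (Int.cast : ℤ → ℚ)) ?_ ?_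
    · simpa [← hpf] using hzero
    · rw [card_image_of_injective _ Int.cast_injective]
      exact hp.trans_lt hs
  ext x
  simp [hpf, hp0]

theorem natDegree_bernoulli_le (n : ℕ) : (Polynomial.bernoulli n).natDegree ≤ n :=
  natDegree_le_iff_coeff_eq_zero.2 fun i hi => by
    rw [coeff_bernoulli, if_neg (by omega)]

/-- `B_{k+1}(x+1) - B_{k+1}(x) = (k+1) x^k`, so `∑ₖ pₖ B_{k+1} / (k+1)` is an antidifference
of `p`. -/
theorem exists_fwdDiff_eq (p : ℚ[X]) :
    ∃ q : ℚ[X], q.natDegree ≤ p.natDegree + 1 ∧ ∀ x : ℚ, q.eval (x + 1) - q.eval x = p.eval x := by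
  refine ⟨∑ k ∈ range (p.natDegree + 1), C (p.coeff k / (k + 1)) * Polynomial.bernoulli (k + 1),
    natDegree_sum_le_of_forall_le _ _ fun k hk => (natDegree_C_mul_le _ _).trans
      ((natDegree_bernoulli_le _).trans (by simp at hk; omega)), fun x => ?_⟩
  simp only [eval_finsetSum, eval_mul, eval_C, ← sum_sub_distrib, ← mul_sub, add_comm x,
    bernoulli_eval_one_add, add_sub_cancel_left, eval_eq_sum_range (p := p)]
  refine sum_congr rfl fun k _ => ?_
  push_cast
  field_simp

theorem antidiff_mem_polyFun {d : ℕ} {g : ℤ → ℚ} (hg : g ∈ polyFun d) :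
    antidiff g ∈ polyFun (d + 1) := by
  obtain ⟨p, hp, hpg⟩ := mem_polyFun.1 hg
  obtain ⟨q, hq, hqp⟩ := exists_fwdDiff_eq p
  refine mem_polyFun.2 ⟨q - C (q.eval 0), (natDegree_sub_C).le.trans (by omega), ?_⟩
  refine congrFun (eq_of_fwdDiff_eq (by simp) ?_)
  rw [fwdDiff_antidiff]
  ext x
  simp [fwdDiff, hpg, ← hqp]

end PolynomialFunctions

/-- The polynomial extension of `m ↦ {m, m - j}` to `ℤ`. -/
noncomputable def stirlingDiag : ℕ → ℤ → ℚ
  | 0 => fun _ => 1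
  | j + 1 => antidiff fun x => ((x : ℚ) - j) * stirlingDiag j x

theorem stirlingDiag_succ_add_one (j : ℕ) (x : ℤ) :
    stirlingDiag (j + 1) (x + 1) = stirlingDiag (j + 1) x + ((x : ℚ) - j) * stirlingDiag j x := by
  rw [← congrFun (fwdDiff_antidiff fun x => ((x : ℚ) - j) * stirlingDiag j x) x, fwdDiff]
  simp [stirlingDiag]

theorem stirlingDiag_succ_eq_zero {j m : ℕ} (hm : m ≤ j + 1) : stirlingDiag (j + 1) m = 0 := by
  induction m with
  | zero => exact antidiff_zero _
  | succ m ih =>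
    push_cast
    rw [stirlingDiag_succ_add_one, ih (by omega)]
    cases j with
    | zero => simp [show m = 0 by omega]
    | succ j => simp [stirlingDiag_succ_eq_zero (by omega : m ≤ j + 1)]

theorem stirlingDiag_natCast_add (j k : ℕ) : stirlingDiag j (k + j : ℕ) = stirling2 (k + j) k := by
  induction j generalizing k with
  | zero => simp [stirlingDiag, stirling2_eq_stirlingSecond, Nat.stirlingSecond_self]
  | succ j ih =>
    induction k with
    | zero => simpa [stirling2_eq_stirlingSecond] using stirlingDiag_succ_eq_zero le_rfl
    | succ k ihk =>
      rw [show ((k + 1 + (j + 1) : ℕ) : ℤ) = (k + (j + 1) : ℕ) + 1 by push_cast; ring,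
        stirlingDiag_succ_add_one, ihk, show k + (j + 1) = k + 1 + j by ring, ih,
        show k + 1 + (j + 1) = k + 1 + j + 1 by ring, stirling2_eq_stirlingSecond,
        stirling2_eq_stirlingSecond, stirling2_eq_stirlingSecond, Nat.stirlingSecond_succ_succ]
      push_cast
      ring

theorem stirlingDiag_neg_natCast (j k : ℕ) : stirlingDiag j (-k) = stirling1 (j + k) k := by
  induction j generalizing k with
  | zero => simp [stirlingDiag, stirling1_eq_stirlingFirst, Nat.stirlingFirst_self]
  | succ j ih =>
    induction k with
    | zero =>
      simpa [stirling1_eq_stirlingFirst] using stirlingDiag_succ_eq_zero (j := j) (Nat.zero_le _)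
    | succ k ihk =>
      have := stirlingDiag_succ_add_one j (-(k + 1 : ℕ))
      rw [show (-(k + 1 : ℕ) : ℤ) + 1 = -k by push_cast; ring, ihk, ih,
        show j + (k + 1) = j + 1 + k by ring] at this
      rw [show j + 1 + (k + 1) = j + 1 + k + 1 by ring, stirling1_eq_stirlingFirst,
        Nat.stirlingFirst_succ_succ]
      rw [stirling1_eq_stirlingFirst, stirling1_eq_stirlingFirst] at this
      push_cast at this ⊢
      linarith

theorem stirlingDiag_mem_polyFun : ∀ j, stirlingDiag j ∈ polyFun (2 * j)
  | 0 => const_mem_polyFun 1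
  | j + 1 => by
    have := antidiff_mem_polyFun
      (mul_mem_polyFun (by simpa using sub_const_pow_mem_polyFun j 1) (stirlingDiag_mem_polyFun j))
    exact polyFun_mono (by omega) this

theorem intChoose_mul_intChoose_neg {n u v : ℕ} (hu : u ≤ n) (hv : v ≤ n) :
    intChoose (n + -v) (n - u) * intChoose (n - -v) (n + u) = if u = v then 1 else 0 := by
  rw [show (n : ℤ) + -v = (n - v : ℕ) by omega, show (n : ℤ) - -v = (n + v : ℕ) by omega,
    intChoose_natCast, intChoose_natCast]
  split_ifs with h
  · simp [h]
  · rcases lt_or_gt_of_ne h with h | h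
    · simp [Nat.choose_eq_zero_of_lt (by omega : n - v < n - u)]
    · simp [Nat.choose_eq_zero_of_lt (by omega : n + v < n + u)]

theorem sum_intChoose_mul_intChoose_mem_polyFun (n : ℕ) (c : ℕ → ℚ) :
    (fun y : ℤ => ∑ u ∈ range (n + 1), intChoose (n + y) (n - u) * intChoose (n - y) (n + u) * c u)
      ∈ polyFun (2 * n) := by
  rw [← Finset.sum_fn]
  refine Submodule.sum_mem _ fun u hu => ?_
  have h₁ := comp_affine_mem_polyFun (intChoose_mem_polyFun (n - u)) n 1
  have h₂ := comp_affine_mem_polyFun (intChoose_mem_polyFun (n + u)) n (-1)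
  simp only [one_mul, neg_one_mul, ← sub_eq_add_neg] at h₁ h₂
  rw [mem_range] at hu
  exact polyFun_mono (by omega) (mul_mem_polyFun (mul_mem_polyFun h₁ h₂) (const_mem_polyFun (c u)))

theorem eq_sum_intChoose_mul_intChoose {n : ℕ} {f : ℤ → ℚ} (hf : f ∈ polyFun (2 * n))
    (hzero : ∀ m : ℕ, 1 ≤ m → m ≤ n → f m = 0) (y : ℤ) :
    f y = ∑ u ∈ range (n + 1), intChoose (n + y) (n - u) * intChoose (n - y) (n + u) * f (-u) := by
  set g : ℤ → ℚ := fun y =>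
    ∑ u ∈ range (n + 1), intChoose (n + y) (n - u) * intChoose (n - y) (n + u) * f (-u)
  suffices f - g = 0 from sub_eq_zero.1 (congrFun this y)
  refine eq_zero_of_mem_polyFun (sub_mem hf (sum_intChoose_mul_intChoose_mem_polyFun n _))
    (Icc (-n) n) (by simp; omega) fun z hz => ?_
  rw [mem_Icc] at hz
  rw [Pi.sub_apply, sub_eq_zero]
  simp only [g]
  rcases le_or_gt z 0 with hz0 | hz0
  · obtain ⟨v, rfl⟩ : ∃ v : ℕ, z = -v := ⟨(-z).toNat, by omega⟩
    rw [sum_congr rfl fun u hu => by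
      rw [intChoose_mul_intChoose_neg (by rw [mem_range] at hu; omega) (by omega)]]
    simp [show v < n + 1 by omega]
  · obtain ⟨m, rfl⟩ : ∃ m : ℕ, z = m := ⟨z.toNat, by omega⟩
    rw [hzero m (by omega) (by omega)]
    refine (sum_eq_zero fun u _ => ?_).symm
    rw [show (n : ℤ) - m = (n - m : ℕ) by omega, intChoose_natCast,
      Nat.choose_eq_zero_of_lt (by omega)]
    simp

/-- `bsB y (y - n)` with `{y - h, y - n}` replaced by its polynomial extension. -/
noncomputable def bsPoly (n : ℕ) (y : ℤ) : ℚ :=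
  ∑ h ∈ range (n + 1),
    bernoulli h * intChoose y h * stirlingDiag (n - h) (y - h) * ((y : ℚ) - n) ^ h

theorem bsPoly_mem_polyFun (n : ℕ) : bsPoly n ∈ polyFun (2 * n) := by
  unfold bsPoly
  rw [← Finset.sum_fn]
  refine Submodule.sum_mem _ fun h hh => ?_
  have hP := comp_affine_mem_polyFun (stirlingDiag_mem_polyFun (n - h)) (-h) 1
  simp only [one_mul, neg_add_eq_sub] at hP
  rw [mem_range] at hh
  exact polyFun_mono (by omega) (mul_mem_polyFun (mul_mem_polyFun (mul_mem_polyFun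
    (const_mem_polyFun _) (intChoose_mem_polyFun h)) hP) (sub_const_pow_mem_polyFun n h))

theorem bsPoly_natCast {n x : ℕ} (hx : n ≤ x) : bsPoly n x = bsB x (x - n) := by
  rw [bsPoly, bsB, ← sum_subset (range_subset_range.2 (by omega : n + 1 ≤ x + 1))]
  · refine sum_congr rfl fun h hh => ?_
    rw [mem_range] at hh
    rw [intChoose_natCast, show (x : ℤ) - h = ((x - n) + (n - h) : ℕ) by omega,
      stirlingDiag_natCast_add, show x - n + (n - h) = x - h by omega, Int.cast_natCast,
      Nat.cast_sub hx]
  · intro h hx' hh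
    rw [mem_range] at hx' hh
    rw [stirling2_eq_stirlingSecond, Nat.stirlingSecond_eq_zero_of_lt (by omega)]
    simp

theorem bsPoly_neg_natCast (n u : ℕ) : bsPoly n (-u) = bsA (n + u) u := by
  rw [bsPoly, bsA, ← sum_subset (range_subset_range.2 (by omega : n + 1 ≤ n + u + 1))]
  · refine sum_congr rfl fun h hh => ?_
    rw [mem_range] at hh
    have hsign : ((-1 : ℚ)) ^ h * (-1) ^ h = 1 := by rw [← mul_pow]; norm_num
    rw [intChoose_neg, show -(u : ℤ) - h = -(h + u : ℕ) by push_cast; ring,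
      stirlingDiag_neg_natCast, show n - h + (h + u) = n + u by omega,
      show ((-(u : ℤ) : ℤ) : ℚ) - n = -1 * ((n + u : ℕ) : ℚ) by push_cast; ring, mul_pow]
    linear_combination (bernoulli h * intChoose (u + h - 1) h * stirling1 (n + u) (h + u) *
      ((n + u : ℕ) : ℚ) ^ h) * hsign
  · intro h _ hh
    rw [mem_range] at hh
    rw [stirling1_eq_stirlingFirst, Nat.stirlingFirst_eq_zero_of_lt (by omega)]
    simp

theorem bsPoly_natCast_eq_zero {n m : ℕ} (hm : 1 ≤ m) (hmn : m ≤ n) : bsPoly n m = 0 := by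
  refine sum_eq_zero fun h hh => ?_
  rw [mem_range] at hh
  rcases lt_or_ge m h with hmh | hhm
  · rw [intChoose_natCast, Nat.choose_eq_zero_of_lt hmh]
    simp
  rcases lt_or_eq_of_le (show h ≤ n by omega) with hhn | rfl
  · rw [show (m : ℤ) - h = (m - h : ℕ) by omega, show n - h = n - h - 1 + 1 by omega,
      stirlingDiag_succ_eq_zero (by omega)]
    simp
  · rw [show m = h by omega]
    simp [zero_pow (by omega : h ≠ 0)]

end BernoulliStirling

open BernoulliStirling

theorem bsB_eq_sum_bsA (n x : ℕ) (hx : n ≤ x) :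
    bsB x (x - n) =
      ∑ u ∈ Finset.range (n + 1),
        intChoose ((n : ℤ) + x) (n - u) * intChoose ((n : ℤ) - x) (n + u) * bsA (n + u) u := by
  rw [← bsPoly_natCast hx, eq_sum_intChoose_mul_intChoose (bsPoly_mem_polyFun n)
    (fun _ => bsPoly_natCast_eq_zero) x]
  simp only [bsPoly_neg_natCast]
end
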